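/- arXiv:1609.09662 — 8 statements merged into one kernel-verified Lean document; each statement's English description precedes it below -/
import Mathlib

section
/- If G is a finite filled group and N is a normal subgroup of G, then the quotient group G/N is filled. -/
open Pointwise

/-- `S` is product-free if `S ∩ SS = ∅`. -/
def ProductFree {G : Type*} [Group G] (S : Set G) : Prop :=
  Disjoint S (S * S)

/-- `S` is locally maximal product-free if it is product-free and not properly
contained in any product-free set. -/
def LocallyMaximalPF {G : Type*} [Group G] (S : Set G) : Prop :=
  ProductFree S ∧ ∀ T : Set G, ProductFree T → S ⊆ T → S = T

/-- `S` fills `G` (is complete) if every non-identity element lies in `S ∪ SS`. -/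
def Fills {G : Type*} [Group G] (S : Set G) : Prop :=
  ∀ g : G, g ≠ 1 → g ∈ S ∪ S * S

/-- `G` is filled if every locally maximal product-free set fills `G`. -/
def Filled (G : Type*) [Group G] : Prop :=
  ∀ S : Set G, LocallyMaximalPF S → Fills S

/-!
Pull back along a surjection `f : G →* H`, such as `G →* G ⧸ N`. If `S` is locally maximal
product-free in a nontrivial `H`, so is `f ⁻¹' S`: given a product-free `T ⊇ f ⁻¹' S` and `t ∈ T`,
the set `insert (f t) S` is still product-free, because whole fibres over `S` lie in `T`, so every
product relation in `insert (f t) S` lifts to one in `T`. Maximality of `S` then forces `f t ∈ S`.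
Finally, if `f ⁻¹' S` fills `G`, its image `S` fills `H`.
-/

section Pullback

variable {G H : Type*} [Group G] [Group H]

theorem ProductFree.singleton {g : G} (hg : g ≠ 1) : ProductFree ({g} : Set G) := by
  rw [ProductFree, Set.singleton_mul_singleton, Set.disjoint_singleton]
  exact fun h => hg (left_eq_mul.mp h)

theorem LocallyMaximalPF.nonempty [Nontrivial G] {S : Set G} (hS : LocallyMaximalPF S) :
    S.Nonempty := by
  obtain ⟨g, hg⟩ := exists_ne (1 : G)
  rw [Set.nonempty_iff_ne_empty]
  rintro rfl
  exact Set.singleton_ne_empty g (hS.2 {g} (.singleton hg) (Set.empty_subset _)).symm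

theorem ProductFree.preimage {S : Set H} (hS : ProductFree S) (f : G →* H) :
    ProductFree (f ⁻¹' S) := by
  rw [ProductFree, Set.disjoint_left]
  rintro _ hx ⟨y, hy, z, hz, rfl⟩
  exact Set.disjoint_left.mp hS hx ⟨f y, hy, f z, hz, (map_mul f y z).symm⟩

variable {f : G →* H} {S : Set H} {T : Set G}

theorem mul_notMem_of_preimage_subset (hT : ProductFree T) (hST : f ⁻¹' S ⊆ T)
    {a b : H} (ha : a ∈ f '' T) (hb : b ∈ f '' T) : a * b ∉ S := by
  obtain ⟨x, hx, rfl⟩ := ha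
  obtain ⟨y, hy, rfl⟩ := hb
  intro hxy
  rw [← map_mul] at hxy
  exact Set.disjoint_left.mp hT (hST hxy) ⟨x, hx, y, hy, rfl⟩

theorem mul_notMem_image_of_preimage_subset_left (hT : ProductFree T) (hST : f ⁻¹' S ⊆ T)
    {a b : H} (ha : a ∈ S) (hb : b ∈ f '' T) : a * b ∉ f '' T := by
  obtain ⟨y, hy, rfl⟩ := hb
  rintro ⟨z, hz, hzab⟩
  have hlift : z * y⁻¹ ∈ T := hST (by simpa [hzab] using ha)
  exact Set.disjoint_left.mp hT hz ⟨z * y⁻¹, hlift, y, hy, inv_mul_cancel_right z y⟩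

theorem mul_notMem_image_of_preimage_subset_right (hT : ProductFree T) (hST : f ⁻¹' S ⊆ T)
    {a b : H} (ha : a ∈ f '' T) (hb : b ∈ S) : a * b ∉ f '' T := by
  obtain ⟨x, hx, rfl⟩ := ha
  rintro ⟨z, hz, hzab⟩
  have hlift : x⁻¹ * z ∈ T := hST (by simpa [hzab] using hb)
  exact Set.disjoint_left.mp hT hz ⟨x, hx, x⁻¹ * z, hlift, mul_inv_cancel_left x z⟩

theorem productFree_insert_of_preimage_subset (hf : Function.Surjective f) (hT : ProductFree T)
    (hST : f ⁻¹' S ⊆ T) {v : H} (hv : v ∈ f '' T) (hv1 : v ≠ 1) :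
    ProductFree (insert v S) := by
  have hlift : insert v S ⊆ f '' T :=
    Set.insert_subset hv ((Set.image_preimage_eq S hf).symm.subset.trans (Set.image_mono hST))
  rw [ProductFree, Set.disjoint_left]
  intro _ hc hmul
  obtain ⟨a, ha, b, hb, rfl⟩ := Set.mem_mul.mp hmul
  rcases hc with hab | hab
  · have hab_mem : a * b ∈ f '' T := hab ▸ hv
    rcases ha with rfl | ha
    · rcases hb with rfl | hb
      · exact hv1 (mul_eq_left.mp hab)
      · exact mul_notMem_image_of_preimage_subset_right hT hST hv hb hab_mem
    · exact mul_notMem_image_of_preimage_subset_left hT hST ha (hlift hb) hab_mem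
  · exact mul_notMem_of_preimage_subset hT hST (hlift ha) (hlift hb) hab

theorem LocallyMaximalPF.preimage [Nontrivial H] (hS : LocallyMaximalPF S)
    (hf : Function.Surjective f) : LocallyMaximalPF (f ⁻¹' S) := by
  refine ⟨hS.1.preimage f, fun T hT hST => hST.antisymm fun t ht => ?_⟩
  obtain ⟨s, hs⟩ := hS.nonempty
  obtain ⟨x, rfl⟩ := hf s
  have hft : f t ≠ 1 := by
    intro h1
    refine mul_notMem_image_of_preimage_subset_right hT hST ⟨t, ht, rfl⟩ hs ?_
    rw [h1, one_mul]
    exact ⟨x, hST hs, rfl⟩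
  show f t ∈ S
  rw [hS.2 _ (productFree_insert_of_preimage_subset hf hT hST ⟨t, ht, rfl⟩ hft)
    (Set.subset_insert _ _)]
  exact Set.mem_insert _ _

theorem Fills.of_preimage (hf : Function.Surjective f) (hS : Fills (f ⁻¹' S)) : Fills S := by
  intro h hh
  obtain ⟨g, rfl⟩ := hf h
  rcases hS g (fun hg => hh (hg ▸ map_one f)) with hg | ⟨x, hx, y, hy, rfl⟩
  · exact Or.inl hg
  · exact Or.inr ⟨f x, hx, f y, hy, (map_mul f x y).symm⟩

theorem Filled.of_surjective (hG : Filled G) (hf : Function.Surjective f) : Filled H := by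
  intro S hS h hh
  have : Nontrivial H := ⟨⟨h, 1, hh⟩⟩
  exact (hG _ (hS.preimage hf)).of_preimage hf h hh

end Pullback

theorem filled_quotient_general {G : Type*} [Group G] (hG : Filled G)
    (N : Subgroup G) [N.Normal] : Filled (G ⧸ N) :=
  hG.of_surjective (QuotientGroup.mk'_surjective N)

theorem filled_quotient {G : Type*} [Group G] [Finite G] (hG : Filled G)
    (N : Subgroup G) [N.Normal] : Filled (G ⧸ N) :=
  filled_quotient_general hG N
end

section
/- The only finite filled group possessing a normal subgroup of index 3 is the cyclic group of order 3. -/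
open Pointwise

theorem filled_index_three {G : Type*} [Group G] [Finite G] (hG : Filled G)
    (N : Subgroup G) (hN : N.Normal) (hidx : N.index = 3) :
    IsCyclic G ∧ Nat.card G = 3 := by

  classical
  set Q := G ⧸ N with hQ
  have hcardQ : Nat.card Q = 3 := by
    rw [← hidx]; exact (Subgroup.index_eq_card N).symm
  have hNtop : N ≠ ⊤ := by
    intro h
    rw [h, Subgroup.index_top] at hidx
    exact absurd hidx (by norm_num)
  obtain ⟨a, haN⟩ : ∃ a : G, a ∉ N := by
    by_contra h
    push_neg at h
    exact hNtop (by rw [Subgroup.eq_top_iff']; exact h)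
  set x : Q := QuotientGroup.mk a with hx
  have hx1 : x ≠ 1 := by
    intro h
    exact haN ((QuotientGroup.eq_one_iff a).mp h)
  have hx3 : x ^ 3 = 1 := by
    rw [← hcardQ]
    exact pow_card_eq_one'
  have hx2 : x * x ≠ 1 := by
    intro h
    apply hx1
    have : x ^ 3 = x * (x * x) := by rw [pow_succ, pow_succ, pow_one, mul_assoc]
    rw [h, mul_one] at this
    rw [← this, hx3]
  have hxx : x * x ≠ x := by
    intro h
    exact hx1 (by simpa using mul_right_cancel (h.trans (one_mul x).symm))
  -- every element of Q is 1, x, or x*x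
  have htri : ∀ y : Q, y = 1 ∨ y = x ∨ y = x * x := by
    intro y
    by_contra h
    push_neg at h
    obtain ⟨h1, h2, h3⟩ := h
    have : Fintype Q := Fintype.ofFinite Q
    have hcard4 : ({y, 1, x, x * x} : Finset Q).card = 4 := by
      rw [Finset.card_insert_of_notMem (by simp [h1, h2, h3]),
        Finset.card_insert_of_notMem (by simp [Ne.symm hx1, Ne.symm hx2]),
        Finset.card_insert_of_notMem (by simp [Ne.symm hxx]),
        Finset.card_singleton]
    have hle : ({y, 1, x, x * x} : Finset Q).card ≤ Fintype.card Q :=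
      Finset.card_le_card (Finset.subset_univ _)
    rw [hcard4, ← Nat.card_eq_fintype_card, hcardQ] at hle
    omega
  set S : Set G := {g : G | QuotientGroup.mk g = x} with hS
  have haS : a ∈ S := by simp [hS, hx]
  have hPF : ProductFree S := by
    rw [ProductFree, Set.disjoint_left]
    rintro s hsS hsSS
    obtain ⟨u, hu, v, hv, rfl⟩ := hsSS
    have hsx : QuotientGroup.mk (u * v) = x := hsS
    have huv : QuotientGroup.mk (u * v) = x * x := by
      rw [QuotientGroup.mk_mul]
      rw [hu, hv]
    exact hxx (huv.symm.trans hsx)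
  have hLM : LocallyMaximalPF S := by
    refine ⟨hPF, fun T hT hST => ?_⟩
    refine Set.Subset.antisymm hST (fun t htT => ?_)
    rcases htri (QuotientGroup.mk t) with h | h | h
    · exfalso
      have hta : t * a ∈ S := by
        simp only [hS, Set.mem_setOf_eq, QuotientGroup.mk_mul, h, one_mul]
        exact hx.symm
      exact Set.disjoint_left.mp hT (hST hta)
        (Set.mul_mem_mul htT (hST haS))
    · exact h
    · exfalso
      have hat : a⁻¹ * t ∈ S := by
        simp only [hS, Set.mem_setOf_eq, QuotientGroup.mk_mul, QuotientGroup.mk_inv, h]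
        rw [← hx]
        group
      have : t ∈ T * T := by
        have := Set.mul_mem_mul (hST haS) (hST hat)
        simpa using this
      exact Set.disjoint_left.mp hT htT this
  have hFills := hG S hLM
  have hNbot : N = ⊥ := by
    rw [Subgroup.eq_bot_iff_forall]
    intro n hn
    by_contra hne
    rcases hFills n hne with h | h
    · exact hx1 (by rw [← h]; exact (QuotientGroup.eq_one_iff n).mpr hn)
    · obtain ⟨u, hu, v, hv, huv⟩ := h
      apply hx2
      have huv' : u * v = n := huv
      have : QuotientGroup.mk (u * v) = (1 : Q) := by
        rw [huv']; exact (QuotientGroup.eq_one_iff n).mpr hn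
      rw [QuotientGroup.mk_mul, hu, hv] at this
      exact this
  have hcardG : Nat.card G = 3 := by
    have h2 := Subgroup.card_mul_index N
    have h1 : Nat.card N = 1 := by rw [hNbot]; exact Subgroup.card_bot
    rw [h1, hidx] at h2
    omega
  refine ⟨?_, hcardG⟩
  have : Fact (Nat.Prime 3) := ⟨by norm_num⟩
  exact isCyclic_of_prime_card (p := 3) hcardG
end

section
/- For every n ≥ 2, the generalized quaternion group of order 4n is not filled. -/
open Pointwise

/-!
The rotations `⟨x⟩` form a cyclic subgroup of index 2, and every element outside it squares to
the central involution `xⁿ`. Hence a locally maximal product-free subset `S` of `⟨x⟩` containing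
`xⁿ` stays locally maximal in the whole group (adjoining any `xᵏy` creates the product
`(xᵏy)² = xⁿ ∈ S`), while `S ∪ SS ⊆ ⟨x⟩` misses `y`. For `n ≥ 3` take
`S = {xᵏ : ⌊n/2⌋ < k ≤ 2⌊n/2⌋ + 1}`, for `n = 2` take `S = {x²}`.
-/

section General

variable {G H : Type*} [Group G] [Group H]

theorem ProductFree.mono {S T : Set G} (hT : ProductFree T) (hST : S ⊆ T) : ProductFree S :=
  Disjoint.mono hST (Set.mul_subset_mul hST hST) hT

theorem not_productFree_of_mul_mem {S : Set G} {x y : G} (hx : x ∈ S) (hy : y ∈ S)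
    (hxy : x * y ∈ S) : ¬ ProductFree S :=
  fun hS => Set.disjoint_left.mp hS hxy (Set.mul_mem_mul hx hy)

theorem productFree_iff {S : Set G} : ProductFree S ↔ ∀ x ∈ S, ∀ y ∈ S, x * y ∉ S := by
  refine ⟨fun hS x hx y hy hxy => not_productFree_of_mul_mem hx hy hxy hS, fun h => ?_⟩
  rw [ProductFree, Set.disjoint_left]
  rintro _ hz ⟨x, hx, y, hy, rfl⟩
  exact h x hx y hy hz

theorem LocallyMaximalPF.not_productFree_insert {S : Set G} (hS : LocallyMaximalPF S) {g : G}
    (hg : g ∉ S) : ¬ ProductFree (insert g S) :=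
  fun h => hg ((hS.2 _ h (Set.subset_insert g S)).symm ▸ Set.mem_insert g S)

theorem locallyMaximalPF_of_not_productFree_insert {S : Set G} (hS : ProductFree S)
    (h : ∀ g ∉ S, ¬ ProductFree (insert g S)) : LocallyMaximalPF S := by
  refine ⟨hS, fun T hT hST => hST.antisymm fun g hgT => ?_⟩
  by_contra hgS
  exact h g hgS (hT.mono (Set.insert_subset hgT hST))

theorem ProductFree.image {f : H →* G} (hf : Function.Injective f) {S : Set H}
    (hS : ProductFree S) : ProductFree (f '' S) := by
  rw [productFree_iff] at hS ⊢
  rintro _ ⟨x, hx, rfl⟩ _ ⟨y, hy, rfl⟩ ⟨z, hz, hxyz⟩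
  rw [← map_mul] at hxyz
  exact hS x hx y hy (hf hxyz ▸ hz)

theorem not_productFree_image {f : H →* G} {S : Set H} (hS : ¬ ProductFree S) :
    ¬ ProductFree (f '' S) := by
  simp only [productFree_iff, not_forall, not_not] at hS
  obtain ⟨x, hx, y, hy, hxy⟩ := hS
  exact not_productFree_of_mul_mem ⟨x, hx, rfl⟩ ⟨y, hy, rfl⟩ (map_mul f x y ▸ ⟨x * y, hxy, rfl⟩)

theorem not_fills_of_subset_subgroup {S : Set G} {K : Subgroup G} (hSK : S ⊆ K) {g : G}
    (hg : g ∉ K) : ¬ Fills S := by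
  intro hS
  have hSS : S * S ⊆ K := by
    rintro _ ⟨x, hx, y, hy, rfl⟩
    exact K.mul_mem (hSK hx) (hSK hy)
  rcases hS g (fun h => hg (h ▸ K.one_mem)) with h | h
  exacts [hg (hSK h), hg (hSS h)]

/-- The witness is `f '' S`: locally maximal product-free in `G`, but `f '' S ∪ (f '' S)²` lies
in `f.range`. -/
theorem not_filled_of_sq_mem_image (f : H →* G) (hf : Function.Injective f) {S : Set H}
    (hS : LocallyMaximalPF S) (hsq : ∀ g ∉ f.range, g * g ∈ f '' S) {g₀ : G}
    (hg₀ : g₀ ∉ f.range) : ¬ Filled G := by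
  intro hG
  refine not_fills_of_subset_subgroup (K := f.range) ?_ hg₀ (hG (f '' S) ?_)
  · rintro _ ⟨x, -, rfl⟩
    exact ⟨x, rfl⟩
  refine locallyMaximalPF_of_not_productFree_insert (hS.1.image hf) fun g hg => ?_
  by_cases hgf : g ∈ f.range
  · obtain ⟨x, rfl⟩ := hgf
    have hx : x ∉ S := fun hx => hg ⟨x, hx, rfl⟩
    rw [← Set.image_insert_eq]
    exact not_productFree_image (hS.not_productFree_insert hx)
  · exact not_productFree_of_mul_mem (Set.mem_insert g _) (Set.mem_insert g _)
      (Set.mem_insert_of_mem g (hsq g hgf))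

end General

namespace ZMod

open Multiplicative

theorem productFree_val_mem_Icc {m q : ℕ} (hm : 3 * q + 2 ≤ m) :
    ProductFree {x : Multiplicative (ZMod m) | x.toAdd.val ∈ Set.Icc (q + 1) (2 * q + 1)} := by
  have : NeZero m := ⟨by omega⟩
  refine productFree_iff.mpr fun x ⟨hx₁, hx₂⟩ y ⟨hy₁, hy₂⟩ ⟨hxy₁, hxy₂⟩ => ?_
  rw [toAdd_mul] at hxy₁ hxy₂
  rcases lt_or_ge (x.toAdd.val + y.toAdd.val) m with h | h
  · rw [val_add_of_lt h] at hxy₁ hxy₂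
    omega
  · rw [val_add_of_le h] at hxy₁ hxy₂
    omega

/-- Every residue `k` outside `[q+1, 2q+1]` is `k + (q+1)` with `k ≤ q`, or `(q+1) + (k-q-1)`, or
`(k-2q-1) + (2q+1)`, so it cannot join the interval without breaking product-freeness. -/
theorem locallyMaximalPF_val_mem_Icc {m q : ℕ} (hm : 3 * q + 2 ≤ m) (hm' : m ≤ 4 * q + 3) :
    LocallyMaximalPF
      {x : Multiplicative (ZMod m) | x.toAdd.val ∈ Set.Icc (q + 1) (2 * q + 1)} := by
  have : NeZero m := ⟨by omega⟩
  set S := {x : Multiplicative (ZMod m) | x.toAdd.val ∈ Set.Icc (q + 1) (2 * q + 1)}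
  have mem_S (j : ℕ) (h₁ : q + 1 ≤ j) (h₂ : j ≤ 2 * q + 1) : ofAdd (j : ZMod m) ∈ S := by
    show (j : ZMod m).val ∈ Set.Icc (q + 1) (2 * q + 1)
    rw [val_cast_of_lt (by omega)]
    exact ⟨h₁, h₂⟩
  have ofAdd_add_natCast (i j : ℕ) :
      ofAdd (i : ZMod m) * ofAdd (j : ZMod m) = ofAdd ((i + j : ℕ) : ZMod m) := by
    rw [← ofAdd_add, Nat.cast_add]
  refine locallyMaximalPF_of_not_productFree_insert (productFree_val_mem_Icc hm) fun g hg => ?_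
  obtain ⟨k, hk, rfl⟩ : ∃ k < m, ofAdd (k : ZMod m) = g :=
    ⟨g.toAdd.val, val_lt _, by rw [natCast_zmod_val, ofAdd_toAdd]⟩
  have hk' : k < q + 1 ∨ 2 * q + 1 < k := by
    by_contra! h
    exact hg (mem_S k h.1 h.2)
  rcases hk' with hk' | hk'
  · refine not_productFree_of_mul_mem (Set.mem_insert _ _)
      (Set.mem_insert_of_mem _ (mem_S (q + 1) le_rfl (by omega))) ?_
    rw [ofAdd_add_natCast]
    exact Set.mem_insert_of_mem _ (mem_S _ (by omega) (by omega))
  rcases le_or_gt k (3 * q + 2) with hk'' | hk''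
  · refine not_productFree_of_mul_mem
      (Set.mem_insert_of_mem _ (mem_S (q + 1) le_rfl (by omega)))
      (Set.mem_insert_of_mem _ (mem_S (k - (q + 1)) (by omega) (by omega))) ?_
    rw [ofAdd_add_natCast, Nat.add_sub_cancel' (by omega)]
    exact Set.mem_insert _ _
  · refine not_productFree_of_mul_mem
      (Set.mem_insert_of_mem _ (mem_S (k - (2 * q + 1)) (by omega) (by omega)))
      (Set.mem_insert_of_mem _ (mem_S (2 * q + 1) (by omega) le_rfl)) ?_
    rw [ofAdd_add_natCast, Nat.sub_add_cancel (by omega)]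
    exact Set.mem_insert _ _

end ZMod

open Multiplicative in
theorem locallyMaximalPF_singleton_ofAdd_two :
    LocallyMaximalPF ({ofAdd 2} : Set (Multiplicative (ZMod 4))) := by
  refine locallyMaximalPF_of_not_productFree_insert ?_ fun g hg => ?_
  · rw [productFree_iff]
    decide
  have key : g * ofAdd 2 = ofAdd 2 ∨ g * g = ofAdd 2 := by
    revert g
    decide
  rcases key with h | h
  · exact not_productFree_of_mul_mem (Set.mem_insert _ _)
      (Set.mem_insert_of_mem _ rfl) (by rw [h]; exact Set.mem_insert_of_mem _ rfl)
  · exact not_productFree_of_mul_mem (Set.mem_insert _ _) (Set.mem_insert _ _)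
      (by rw [h]; exact Set.mem_insert_of_mem _ rfl)

namespace QuaternionGroup

open Multiplicative

def rotation (n : ℕ) : Multiplicative (ZMod (2 * n)) →* QuaternionGroup n where
  toFun i := a i.toAdd
  map_one' := rfl
  map_mul' _ _ := rfl

variable {n : ℕ}

theorem rotation_injective : Function.Injective (rotation n) :=
  fun _ _ h => a.inj h

theorem xa_notMem_range_rotation (i : ZMod (2 * n)) : xa i ∉ (rotation n).range := by
  rintro ⟨_, ⟨⟩⟩

theorem mul_self_of_notMem_range_rotation {g : QuaternionGroup n}
    (hg : g ∉ (rotation n).range) : g * g = rotation n (ofAdd n) := by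
  cases g with
  | a i => exact absurd ⟨ofAdd i, rfl⟩ hg
  | xa i => rw [xa_mul_xa, add_sub_cancel_right]; rfl

theorem not_filled_of_locallyMaximalPF {S : Set (Multiplicative (ZMod (2 * n)))}
    (hS : LocallyMaximalPF S) (hn : ofAdd (n : ZMod (2 * n)) ∈ S) :
    ¬ Filled (QuaternionGroup n) :=
  not_filled_of_sq_mem_image (rotation n) rotation_injective hS
    (fun _ hg => mul_self_of_notMem_range_rotation hg ▸ ⟨_, hn, rfl⟩) (xa_notMem_range_rotation 0)

end QuaternionGroup

theorem quaternion_not_filled (n : ℕ) (hn : 2 ≤ n) :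
    ¬ Filled (QuaternionGroup n) := by
  obtain rfl | hn := hn.eq_or_lt
  -- for `n = 2` the interval `{2, 3} ⊆ ZMod 4` is not product-free (`3 + 3 = 2`)
  · exact QuaternionGroup.not_filled_of_locallyMaximalPF locallyMaximalPF_singleton_ofAdd_two rfl
  · refine QuaternionGroup.not_filled_of_locallyMaximalPF
      (ZMod.locallyMaximalPF_val_mem_Icc (q := n / 2) (by omega) (by omega)) ?_
    show (n : ZMod (2 * n)).val ∈ Set.Icc (n / 2 + 1) (2 * (n / 2) + 1)
    rw [ZMod.val_cast_of_lt (by omega)]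
    constructor <;> omega
end

section
/- Let n be an odd integer with n ≥ 13. Then the dihedral group D_{2n} of order 2n is not filled; that is, D_{2n} contains a locally maximal product-free set S such that some non-identity element of D_{2n} lies outside S ∪ SS. -/
open Pointwise

namespace NotFilledAux

open DihedralGroup

variable {n : ℕ}

/-- The candidate set built from rotation indices `A` and reflection indices `B`. -/
def dset (A B : Set (ZMod n)) : Set (DihedralGroup n) :=
  {g | ∃ a ∈ A, g = r a} ∪ {g | ∃ b ∈ B, g = sr b}

lemma mem_r {A B : Set (ZMod n)} {a : ZMod n} : r a ∈ dset A B ↔ a ∈ A := by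
  simp [dset, eq_comm]

lemma mem_sr {A B : Set (ZMod n)} {b : ZMod n} : sr b ∈ dset A B ↔ b ∈ B := by
  simp [dset, eq_comm]

theorem master (A B : Set (ZMod n))
    (h1 : ∀ a1 ∈ A, ∀ a2 ∈ A, a1 + a2 ∉ A)
    (h2 : ∀ b ∈ B, ∀ a ∈ A, b + a ∉ B)
    (h4 : ∀ d : ZMod n, d ∈ B ∨ (∃ b ∈ B, ∃ a ∈ A, d = b + a ∨ b = d + a))
    (h5 : ∀ c : ZMod n, c ≠ 0 → c ∉ A →
        (∃ a1 ∈ A, ∃ a2 ∈ A, c = a1 + a2 ∨ a1 = c + a2) ∨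
        (∃ b1 ∈ B, ∃ b2 ∈ B, b2 = c + b1) ∨ c + c ∈ A)
    (h6 : ∃ c : ZMod n, c ≠ 0 ∧ c ∉ A ∧ (∀ a1 ∈ A, ∀ a2 ∈ A, c ≠ a1 + a2) ∧
        (∀ b1 ∈ B, ∀ b2 ∈ B, b2 ≠ c + b1)) :
    LocallyMaximalPF (dset A B) ∧ ¬ Fills (dset A B) := by
  have hpf : ProductFree (dset A B) := by
    rw [ProductFree, Set.disjoint_left]
    rintro x hx hxx
    rw [Set.mem_mul] at hxx
    obtain ⟨u, hu, v, hv, huv⟩ := hxx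
    rcases hu with ⟨a1, ha1, rfl⟩ | ⟨b1, hb1, rfl⟩ <;>
      rcases hv with ⟨a2, ha2, rfl⟩ | ⟨b2, hb2, rfl⟩ <;>
      rcases hx with ⟨a, haA, rfl⟩ | ⟨b, hbB, rfl⟩ <;>
      simp only [r_mul_r, r_mul_sr, sr_mul_r, sr_mul_sr, r.injEq, sr.injEq,
        reduceCtorEq] at huv
    · exact h1 a1 ha1 a2 ha2 (huv ▸ haA)
    · -- r a1 * sr b2 = sr b : b2 - a1 = b
      have : b2 = b + a1 := by rw [← huv]; ring
      exact h2 b hbB a1 ha1 (this ▸ hb2)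
    · -- sr b1 * r a2 = sr b : b1 + a2 = b
      exact h2 b1 hb1 a2 ha2 (huv ▸ hbB)
    · -- sr b1 * sr b2 = r a : b2 - b1 = a
      have : b2 = b1 + a := by rw [← huv]; ring
      exact h2 b1 hb1 a haA (this ▸ hb2)
  refine ⟨⟨hpf, ?_⟩, ?_⟩
  · intro T hT hST
    refine Set.Subset.antisymm hST fun g hgT => ?_
    by_contra hgS
    rw [ProductFree, Set.disjoint_left] at hT
    rcases g with c | d
    · have hcA : c ∉ A := fun h => hgS (mem_r.2 h)
      by_cases hc0 : c = 0
      · subst hc0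
        have h' := Set.mul_mem_mul hgT hgT
        rw [r_mul_r, add_zero] at h'
        exact hT hgT h'
      · rcases h5 c hc0 hcA with ⟨a1, ha1, a2, ha2, heq | heq⟩ | ⟨b1, hb1, b2, hb2, heq⟩ | hcc
        · have h' := Set.mul_mem_mul (hST (mem_r.2 ha1)) (hST (mem_r.2 ha2))
          rw [r_mul_r, ← heq] at h'
          exact hT hgT h'
        · have h' := Set.mul_mem_mul hgT (hST (mem_r.2 ha2))
          rw [r_mul_r, ← heq] at h'
          exact hT (hST (mem_r.2 ha1)) h'
        · have h' := Set.mul_mem_mul (hST (mem_sr.2 hb1)) hgT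
          rw [sr_mul_r, add_comm b1 c, ← heq] at h'
          exact hT (hST (mem_sr.2 hb2)) h'
        · have h' := Set.mul_mem_mul hgT hgT
          rw [r_mul_r] at h'
          exact hT (hST (mem_r.2 hcc)) h'
    · have hdB : d ∉ B := fun h => hgS (mem_sr.2 h)
      rcases h4 d with hd | ⟨b, hb, a, ha, heq | heq⟩
      · exact hdB hd
      · have h' := Set.mul_mem_mul (hST (mem_sr.2 hb)) (hST (mem_r.2 ha))
        rw [sr_mul_r, ← heq] at h'
        exact hT hgT h'
      · have h' := Set.mul_mem_mul hgT (hST (mem_r.2 ha))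
        rw [sr_mul_r, ← heq] at h'
        exact hT (hST (mem_sr.2 hb)) h'
  · intro hF
    obtain ⟨c, hc0, hcA, hcAA, hcBB⟩ := h6
    have hne : (r c : DihedralGroup n) ≠ 1 := by
      rw [one_def]; exact fun h => hc0 (r.inj h)
    rcases hF (r c) hne with hS | hSS
    · rcases hS with ⟨a, haA, heq⟩ | ⟨b, hbB, heq⟩
      · rw [r.injEq] at heq; exact hcA (heq ▸ haA)
      · exact absurd heq (by simp)
    · rw [Set.mem_mul] at hSS
      obtain ⟨u, hu, v, hv, huv⟩ := hSS
      rcases hu with ⟨a1, ha1, rfl⟩ | ⟨b1, hb1, rfl⟩ <;>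
        rcases hv with ⟨a2, ha2, rfl⟩ | ⟨b2, hb2, rfl⟩ <;>
        simp only [r_mul_r, r_mul_sr, sr_mul_r, sr_mul_sr, r.injEq, sr.injEq,
          reduceCtorEq] at huv
      · exact hcAA a1 ha1 a2 ha2 huv.symm
      · exact hcBB b1 hb1 b2 hb2 (by rw [← huv]; ring)

end NotFilledAux

set_option linter.unusedSectionVars false

namespace NotFilledAux2

variable {n : ℕ}

lemma addval [NeZero n] (x y : ZMod n) :
    ((x + y).val = x.val + y.val ∨ (x + y).val + n = x.val + y.val) ∧
      (x + y).val < n ∧ x.val < n ∧ y.val < n := by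
  refine ⟨?_, (x + y).val_lt, x.val_lt, y.val_lt⟩
  have hx := x.val_lt
  have hy := y.val_lt
  rw [ZMod.val_add]
  rcases Nat.lt_or_ge (x.val + y.val) n with h | h
  · left; exact Nat.mod_eq_of_lt h
  · right
    rw [Nat.mod_eq_sub_mod h, Nat.mod_eq_of_lt (by omega)]
    omega

lemma veq [NeZero n] {x y : ZMod n} (h : x.val = y.val) : x = y :=
  ZMod.val_injective n h

def Ag (m q : ℕ) : Set (ZMod n) :=
  {x | (m + 1 ≤ x.val ∧ x.val ≤ q) ∨ (2*q + 1 ≤ x.val ∧ x.val ≤ n - (m + q + 1))}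

def Bg (m : ℕ) : Set (ZMod n) := {x | x.val ≤ m}

section

variable (m q : ℕ) (hm : 3 ≤ m) (hq1 : m + 1 ≤ q) (hq2 : q ≤ 2*m + 1)
  (hc3 : n ≤ 2*m + 3*q + 1) (hc5 : n ≤ 3*m + 2*q + 2) (hc6 : n ≤ m + 5*q + 1)
  (hc9 : 4*m + q + 3 ≤ n) (hc10 : 3*m + 2*q + 1 ≤ n) (hc4 : m + 3*q + 2 ≤ n)

include hm hq1 hq2 hc3 hc5 hc6 hc9 hc10 hc4

lemma gh1 [NeZero n] : ∀ a1 ∈ Ag m q (n := n), ∀ a2 ∈ Ag m q, a1 + a2 ∉ Ag m q := by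
  intro a1 ha1 a2 ha2 hs
  simp only [Ag, Set.mem_setOf_eq] at ha1 ha2 hs
  have h3 := addval a1 a2
  omega

lemma gh2 [NeZero n] : ∀ b ∈ Bg m (n := n), ∀ a ∈ Ag m q, b + a ∉ Bg m := by
  intro b hb a ha hs
  simp only [Ag, Bg, Set.mem_setOf_eq] at hb ha hs
  have h3 := addval b a
  omega

lemma gh4 [NeZero n] : ∀ d : ZMod n,
    d ∈ Bg m ∨ (∃ b ∈ Bg m (n := n), ∃ a ∈ Ag m q, d = b + a ∨ b = d + a) := by
  intro d
  have hvn := d.val_lt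
  by_cases h0 : d.val ≤ m
  · exact Or.inl h0
  right
  by_cases hc0 : d.val ≤ q
  · refine ⟨((0 : ℕ) : ZMod n), ?_, d, ?_, Or.inl ?_⟩
    · have e1 : ((0 : ℕ) : ZMod n).val = 0 := ZMod.val_cast_of_lt (by omega)
      simp only [Bg, Set.mem_setOf_eq, e1]
      omega
    · simp only [Ag, Set.mem_setOf_eq]
      omega
    · refine veq ?_
      have e1 : ((0 : ℕ) : ZMod n).val = 0 := ZMod.val_cast_of_lt (by omega)
      have h3 := addval ((0 : ℕ) : ZMod n) d
      omega
  by_cases hc1 : d.val ≤ m + q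
  · refine ⟨((d.val - q : ℕ) : ZMod n), ?_, ((q : ℕ) : ZMod n), ?_, Or.inl ?_⟩
    · have e1 : ((d.val - q : ℕ) : ZMod n).val = d.val - q := ZMod.val_cast_of_lt (by omega)
      simp only [Bg, Set.mem_setOf_eq, e1]
      omega
    · have e1 : ((q : ℕ) : ZMod n).val = q := ZMod.val_cast_of_lt (by omega)
      simp only [Ag, Set.mem_setOf_eq, e1]
      omega
    · refine veq ?_
      have e1 : ((d.val - q : ℕ) : ZMod n).val = d.val - q := ZMod.val_cast_of_lt (by omega)
      have e2 : ((q : ℕ) : ZMod n).val = q := ZMod.val_cast_of_lt (by omega)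
      have h3 := addval ((d.val - q : ℕ) : ZMod n) ((q : ℕ) : ZMod n)
      omega
  by_cases hc2 : d.val ≤ n - (2*q + 1)
  · refine ⟨((0 : ℕ) : ZMod n), ?_, ((n - d.val : ℕ) : ZMod n), ?_, Or.inr ?_⟩
    · have e1 : ((0 : ℕ) : ZMod n).val = 0 := ZMod.val_cast_of_lt (by omega)
      simp only [Bg, Set.mem_setOf_eq, e1]
      omega
    · have e1 : ((n - d.val : ℕ) : ZMod n).val = n - d.val := ZMod.val_cast_of_lt (by omega)
      simp only [Ag, Set.mem_setOf_eq, e1]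
      omega
    · refine veq ?_
      have e1 : ((0 : ℕ) : ZMod n).val = 0 := ZMod.val_cast_of_lt (by omega)
      have e2 : ((n - d.val : ℕ) : ZMod n).val = n - d.val := ZMod.val_cast_of_lt (by omega)
      have h3 := addval d ((n - d.val : ℕ) : ZMod n)
      omega
  by_cases hc3 : d.val ≤ n - (2*q + 1) + m
  · refine ⟨((d.val - (n - (2*q + 1)) : ℕ) : ZMod n), ?_, ((2*q + 1 : ℕ) : ZMod n), ?_, Or.inr ?_⟩
    · have e1 : ((d.val - (n - (2*q + 1)) : ℕ) : ZMod n).val = d.val - (n - (2*q + 1)) := ZMod.val_cast_of_lt (by omega)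
      simp only [Bg, Set.mem_setOf_eq, e1]
      omega
    · have e1 : ((2*q + 1 : ℕ) : ZMod n).val = 2*q + 1 := ZMod.val_cast_of_lt (by omega)
      simp only [Ag, Set.mem_setOf_eq, e1]
      omega
    · refine veq ?_
      have e1 : ((d.val - (n - (2*q + 1)) : ℕ) : ZMod n).val = d.val - (n - (2*q + 1)) := ZMod.val_cast_of_lt (by omega)
      have e2 : ((2*q + 1 : ℕ) : ZMod n).val = 2*q + 1 := ZMod.val_cast_of_lt (by omega)
      have h3 := addval d ((2*q + 1 : ℕ) : ZMod n)
      omega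
  by_cases hc4 : d.val ≤ n - (m + q + 1)
  · refine ⟨((0 : ℕ) : ZMod n), ?_, d, ?_, Or.inl ?_⟩
    · have e1 : ((0 : ℕ) : ZMod n).val = 0 := ZMod.val_cast_of_lt (by omega)
      simp only [Bg, Set.mem_setOf_eq, e1]
      omega
    · simp only [Ag, Set.mem_setOf_eq]
      omega
    · refine veq ?_
      have e1 : ((0 : ℕ) : ZMod n).val = 0 := ZMod.val_cast_of_lt (by omega)
      have h3 := addval ((0 : ℕ) : ZMod n) d
      omega
  by_cases hc5 : d.val ≤ n - q - 1
  · refine ⟨((d.val - (n - (m + q + 1)) : ℕ) : ZMod n), ?_, ((n - (m + q + 1) : ℕ) : ZMod n), ?_, Or.inl ?_⟩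
    · have e1 : ((d.val - (n - (m + q + 1)) : ℕ) : ZMod n).val = d.val - (n - (m + q + 1)) := ZMod.val_cast_of_lt (by omega)
      simp only [Bg, Set.mem_setOf_eq, e1]
      omega
    · have e1 : ((n - (m + q + 1) : ℕ) : ZMod n).val = n - (m + q + 1) := ZMod.val_cast_of_lt (by omega)
      simp only [Ag, Set.mem_setOf_eq, e1]
      omega
    · refine veq ?_
      have e1 : ((d.val - (n - (m + q + 1)) : ℕ) : ZMod n).val = d.val - (n - (m + q + 1)) := ZMod.val_cast_of_lt (by omega)
      have e2 : ((n - (m + q + 1) : ℕ) : ZMod n).val = n - (m + q + 1) := ZMod.val_cast_of_lt (by omega)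
      have h3 := addval ((d.val - (n - (m + q + 1)) : ℕ) : ZMod n) ((n - (m + q + 1) : ℕ) : ZMod n)
      omega
  by_cases hc6 : d.val ≤ n - m - 1
  · refine ⟨((0 : ℕ) : ZMod n), ?_, ((n - d.val : ℕ) : ZMod n), ?_, Or.inr ?_⟩
    · have e1 : ((0 : ℕ) : ZMod n).val = 0 := ZMod.val_cast_of_lt (by omega)
      simp only [Bg, Set.mem_setOf_eq, e1]
      omega
    · have e1 : ((n - d.val : ℕ) : ZMod n).val = n - d.val := ZMod.val_cast_of_lt (by omega)
      simp only [Ag, Set.mem_setOf_eq, e1]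
      omega
    · refine veq ?_
      have e1 : ((0 : ℕ) : ZMod n).val = 0 := ZMod.val_cast_of_lt (by omega)
      have e2 : ((n - d.val : ℕ) : ZMod n).val = n - d.val := ZMod.val_cast_of_lt (by omega)
      have h3 := addval d ((n - d.val : ℕ) : ZMod n)
      omega
  · -- final case
    refine ⟨((d.val + m + 1 - n : ℕ) : ZMod n), ?_, ((m + 1 : ℕ) : ZMod n), ?_, Or.inr ?_⟩
    · have e1 : ((d.val + m + 1 - n : ℕ) : ZMod n).val = d.val + m + 1 - n := ZMod.val_cast_of_lt (by omega)
      simp only [Bg, Set.mem_setOf_eq, e1]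
      omega
    · have e1 : ((m + 1 : ℕ) : ZMod n).val = m + 1 := ZMod.val_cast_of_lt (by omega)
      simp only [Ag, Set.mem_setOf_eq, e1]
      omega
    · refine veq ?_
      have e1 : ((d.val + m + 1 - n : ℕ) : ZMod n).val = d.val + m + 1 - n := ZMod.val_cast_of_lt (by omega)
      have e2 : ((m + 1 : ℕ) : ZMod n).val = m + 1 := ZMod.val_cast_of_lt (by omega)
      have h3 := addval d ((m + 1 : ℕ) : ZMod n)
      omega


lemma gh5 [NeZero n] : ∀ c : ZMod n, c ≠ 0 → c ∉ Ag m q →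
    (∃ a1 ∈ Ag m q (n := n), ∃ a2 ∈ Ag m q, c = a1 + a2 ∨ a1 = c + a2) ∨
      (∃ b1 ∈ Bg m (n := n), ∃ b2 ∈ Bg m, b2 = c + b1) ∨ c + c ∈ Ag m q := by
  intro c hc0 hcA
  have hvn := c.val_lt
  have hv0 : c.val ≠ 0 := fun h => hc0 ((ZMod.val_eq_zero c).mp h)
  simp only [Ag, Set.mem_setOf_eq] at hcA
  by_cases hk0 : c.val ≤ m
  · refine Or.inr (Or.inl ⟨((0 : ℕ) : ZMod n), ?_, c, ?_, ?_⟩)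
    · have e1 : ((0 : ℕ) : ZMod n).val = 0 := ZMod.val_cast_of_lt (by omega)
      simp only [Bg, Set.mem_setOf_eq, e1]
      omega
    · simp only [Bg, Set.mem_setOf_eq]
      omega
    · refine veq ?_
      have e1 : ((0 : ℕ) : ZMod n).val = 0 := ZMod.val_cast_of_lt (by omega)
      have h3 := addval c ((0 : ℕ) : ZMod n)
      omega
  by_cases hk1 : c.val ≤ q
  · exact absurd hcA (by omega)
  by_cases hk2 : c.val ≤ n - (2*m + q + 2)
  · by_cases hs : c.val ≤ 2*q - m
    · refine Or.inl ⟨((2*q + 1 : ℕ) : ZMod n), ?_, ((2*q + 1 - c.val : ℕ) : ZMod n), ?_, Or.inr ?_⟩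
      · have e1 : ((2*q + 1 : ℕ) : ZMod n).val = 2*q + 1 := ZMod.val_cast_of_lt (by omega)
        simp only [Ag, Set.mem_setOf_eq, e1]
        omega
      · have e1 : ((2*q + 1 - c.val : ℕ) : ZMod n).val = 2*q + 1 - c.val := ZMod.val_cast_of_lt (by omega)
        simp only [Ag, Set.mem_setOf_eq, e1]
        omega
      · refine veq ?_
        have e1 : ((2*q + 1 : ℕ) : ZMod n).val = 2*q + 1 := ZMod.val_cast_of_lt (by omega)
        have e2 : ((2*q + 1 - c.val : ℕ) : ZMod n).val = 2*q + 1 - c.val := ZMod.val_cast_of_lt (by omega)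
        have h3 := addval c ((2*q + 1 - c.val : ℕ) : ZMod n)
        omega
    · refine Or.inl ⟨((c.val + m + 1 : ℕ) : ZMod n), ?_, ((m + 1 : ℕ) : ZMod n), ?_, Or.inr ?_⟩
      · have e1 : ((c.val + m + 1 : ℕ) : ZMod n).val = c.val + m + 1 := ZMod.val_cast_of_lt (by omega)
        simp only [Ag, Set.mem_setOf_eq, e1]
        omega
      · have e1 : ((m + 1 : ℕ) : ZMod n).val = m + 1 := ZMod.val_cast_of_lt (by omega)
        simp only [Ag, Set.mem_setOf_eq, e1]
        omega
      · refine veq ?_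
        have e1 : ((c.val + m + 1 : ℕ) : ZMod n).val = c.val + m + 1 := ZMod.val_cast_of_lt (by omega)
        have e2 : ((m + 1 : ℕ) : ZMod n).val = m + 1 := ZMod.val_cast_of_lt (by omega)
        have h3 := addval c ((m + 1 : ℕ) : ZMod n)
        omega
  by_cases hk3 : c.val ≤ 2*q
  · by_cases hs : c.val ≤ m + q + 1
    · refine Or.inl ⟨((m + 1 : ℕ) : ZMod n), ?_, ((c.val - (m + 1) : ℕ) : ZMod n), ?_, Or.inl ?_⟩
      · have e1 : ((m + 1 : ℕ) : ZMod n).val = m + 1 := ZMod.val_cast_of_lt (by omega)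
        simp only [Ag, Set.mem_setOf_eq, e1]
        omega
      · have e1 : ((c.val - (m + 1) : ℕ) : ZMod n).val = c.val - (m + 1) := ZMod.val_cast_of_lt (by omega)
        simp only [Ag, Set.mem_setOf_eq, e1]
        omega
      · refine veq ?_
        have e1 : ((m + 1 : ℕ) : ZMod n).val = m + 1 := ZMod.val_cast_of_lt (by omega)
        have e2 : ((c.val - (m + 1) : ℕ) : ZMod n).val = c.val - (m + 1) := ZMod.val_cast_of_lt (by omega)
        have h3 := addval ((m + 1 : ℕ) : ZMod n) ((c.val - (m + 1) : ℕ) : ZMod n)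
        omega
    · refine Or.inl ⟨((c.val - q : ℕ) : ZMod n), ?_, ((q : ℕ) : ZMod n), ?_, Or.inl ?_⟩
      · have e1 : ((c.val - q : ℕ) : ZMod n).val = c.val - q := ZMod.val_cast_of_lt (by omega)
        simp only [Ag, Set.mem_setOf_eq, e1]
        omega
      · have e1 : ((q : ℕ) : ZMod n).val = q := ZMod.val_cast_of_lt (by omega)
        simp only [Ag, Set.mem_setOf_eq, e1]
        omega
      · refine veq ?_
        have e1 : ((c.val - q : ℕ) : ZMod n).val = c.val - q := ZMod.val_cast_of_lt (by omega)
        have e2 : ((q : ℕ) : ZMod n).val = q := ZMod.val_cast_of_lt (by omega)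
        have h3 := addval ((c.val - q : ℕ) : ZMod n) ((q : ℕ) : ZMod n)
        omega
  by_cases hk4 : c.val ≤ n - (m + q + 1)
  · exact absurd hcA (by omega)
  by_cases hk5 : c.val ≤ 2*m + q + 1
  · refine Or.inr (Or.inr ?_)
    have h3 := addval c c
    simp only [Ag, Set.mem_setOf_eq]
    omega
  by_cases hk6 : c.val ≤ n - q - 1
  · by_cases hs : n ≤ c.val + 2*q - m
    · refine Or.inl ⟨((c.val + (2*q + 1) - n : ℕ) : ZMod n), ?_, ((2*q + 1 : ℕ) : ZMod n), ?_, Or.inr ?_⟩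
      · have e1 : ((c.val + (2*q + 1) - n : ℕ) : ZMod n).val = c.val + (2*q + 1) - n := ZMod.val_cast_of_lt (by omega)
        simp only [Ag, Set.mem_setOf_eq, e1]
        omega
      · have e1 : ((2*q + 1 : ℕ) : ZMod n).val = 2*q + 1 := ZMod.val_cast_of_lt (by omega)
        simp only [Ag, Set.mem_setOf_eq, e1]
        omega
      · refine veq ?_
        have e1 : ((c.val + (2*q + 1) - n : ℕ) : ZMod n).val = c.val + (2*q + 1) - n := ZMod.val_cast_of_lt (by omega)
        have e2 : ((2*q + 1 : ℕ) : ZMod n).val = 2*q + 1 := ZMod.val_cast_of_lt (by omega)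
        have h3 := addval c ((2*q + 1 : ℕ) : ZMod n)
        omega
    · refine Or.inl ⟨((m + 1 : ℕ) : ZMod n), ?_, ((n - c.val + m + 1 : ℕ) : ZMod n), ?_, Or.inr ?_⟩
      · have e1 : ((m + 1 : ℕ) : ZMod n).val = m + 1 := ZMod.val_cast_of_lt (by omega)
        simp only [Ag, Set.mem_setOf_eq, e1]
        omega
      · have e1 : ((n - c.val + m + 1 : ℕ) : ZMod n).val = n - c.val + m + 1 := ZMod.val_cast_of_lt (by omega)
        simp only [Ag, Set.mem_setOf_eq, e1]
        omega
      · refine veq ?_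
        have e1 : ((m + 1 : ℕ) : ZMod n).val = m + 1 := ZMod.val_cast_of_lt (by omega)
        have e2 : ((n - c.val + m + 1 : ℕ) : ZMod n).val = n - c.val + m + 1 := ZMod.val_cast_of_lt (by omega)
        have h3 := addval c ((n - c.val + m + 1 : ℕ) : ZMod n)
        omega
  by_cases hk7 : c.val ≤ n - m - 1
  · refine Or.inl ⟨((c.val - (n - (m + q + 1)) : ℕ) : ZMod n), ?_, ((n - (m + q + 1) : ℕ) : ZMod n), ?_, Or.inl ?_⟩
    · have e1 : ((c.val - (n - (m + q + 1)) : ℕ) : ZMod n).val = c.val - (n - (m + q + 1)) := ZMod.val_cast_of_lt (by omega)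
      simp only [Ag, Set.mem_setOf_eq, e1]
      omega
    · have e1 : ((n - (m + q + 1) : ℕ) : ZMod n).val = n - (m + q + 1) := ZMod.val_cast_of_lt (by omega)
      simp only [Ag, Set.mem_setOf_eq, e1]
      omega
    · refine veq ?_
      have e1 : ((c.val - (n - (m + q + 1)) : ℕ) : ZMod n).val = c.val - (n - (m + q + 1)) := ZMod.val_cast_of_lt (by omega)
      have e2 : ((n - (m + q + 1) : ℕ) : ZMod n).val = n - (m + q + 1) := ZMod.val_cast_of_lt (by omega)
      have h3 := addval ((c.val - (n - (m + q + 1)) : ℕ) : ZMod n) ((n - (m + q + 1) : ℕ) : ZMod n)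
      omega
  · refine Or.inr (Or.inl ⟨((n - c.val : ℕ) : ZMod n), ?_, ((0 : ℕ) : ZMod n), ?_, ?_⟩)
    · have e1 : ((n - c.val : ℕ) : ZMod n).val = n - c.val := ZMod.val_cast_of_lt (by omega)
      simp only [Bg, Set.mem_setOf_eq, e1]
      omega
    · have e1 : ((0 : ℕ) : ZMod n).val = 0 := ZMod.val_cast_of_lt (by omega)
      simp only [Bg, Set.mem_setOf_eq, e1]
      omega
    · refine veq ?_
      have e1 : ((n - c.val : ℕ) : ZMod n).val = n - c.val := ZMod.val_cast_of_lt (by omega)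
      have e2 : ((0 : ℕ) : ZMod n).val = 0 := ZMod.val_cast_of_lt (by omega)
      have h3 := addval c ((n - c.val : ℕ) : ZMod n)
      omega

lemma gh6 [NeZero n] : ∃ c : ZMod n, c ≠ 0 ∧ c ∉ Ag m q ∧
    (∀ a1 ∈ Ag m q (n := n), ∀ a2 ∈ Ag m q, c ≠ a1 + a2) ∧
    (∀ b1 ∈ Bg m (n := n), ∀ b2 ∈ Bg m, b2 ≠ c + b1) := by
  refine ⟨((n - (m + q) : ℕ) : ZMod n), ?_, ?_, ?_, ?_⟩
  all_goals have e0 : ((n - (m + q) : ℕ) : ZMod n).val = n - (m + q) := ZMod.val_cast_of_lt (by omega)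
  · intro h
    rw [h, ZMod.val_zero] at e0
    omega
  · simp only [Ag, Set.mem_setOf_eq, e0]
    omega
  · intro a1 ha1 a2 ha2 heq
    simp only [Ag, Set.mem_setOf_eq] at ha1 ha2
    have h3 := addval a1 a2
    rw [← heq, e0] at h3
    omega
  · intro b1 hb1 b2 hb2 heq
    simp only [Bg, Set.mem_setOf_eq] at hb1 hb2
    have h3 := addval ((n - (m + q) : ℕ) : ZMod n) b1
    rw [← heq] at h3
    rw [e0] at h3
    omega

end

end NotFilledAux2


namespace NotFilledAux2

lemma exists_mq (n : ℕ) (hodd : Odd n) (hn : 19 ≤ n) :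
    ∃ m q : ℕ, 3 ≤ m ∧ m + 1 ≤ q ∧ q ≤ 2*m + 1 ∧ n ≤ 2*m + 3*q + 1 ∧
      n ≤ 3*m + 2*q + 2 ∧ n ≤ m + 5*q + 1 ∧ 4*m + q + 3 ≤ n ∧
      3*m + 2*q + 1 ≤ n ∧ m + 3*q + 2 ≤ n := by
  have h2 := Nat.odd_iff.mp hodd
  obtain ⟨j, hj⟩ : ∃ j, n = 19 + 2*j := ⟨(n - 19)/2, by omega⟩
  obtain ⟨t, r, hr, hjr⟩ : ∃ t r, r < 5 ∧ j = 5*t + r := ⟨j/5, j % 5, by omega, by omega⟩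
  have hr5 : r = 0 ∨ r = 1 ∨ r = 2 ∨ r = 3 ∨ r = 4 := by omega
  rcases hr5 with rfl | rfl | rfl | rfl | rfl
  · exact ⟨3 + 2*t, 4 + 2*t, by omega, by omega, by omega, by omega, by omega,
      by omega, by omega, by omega, by omega⟩
  · exact ⟨3 + 2*t, 5 + 2*t, by omega, by omega, by omega, by omega, by omega,
      by omega, by omega, by omega, by omega⟩
  · exact ⟨3 + 2*t, 6 + 2*t, by omega, by omega, by omega, by omega, by omega,
      by omega, by omega, by omega, by omega⟩
  · exact ⟨4 + 2*t, 6 + 2*t, by omega, by omega, by omega, by omega, by omega,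
      by omega, by omega, by omega, by omega⟩
  · exact ⟨4 + 2*t, 7 + 2*t, by omega, by omega, by omega, by omega, by omega,
      by omega, by omega, by omega, by omega⟩

end NotFilledAux2


namespace NotFilledConcrete

def A13 : Set (ZMod 13) := {x | x.val = 3 ∨ x.val = 5 ∨ x.val = 7}
def B13 : Set (ZMod 13) := {x | x.val ≤ 2}
instance : DecidablePred (· ∈ A13) := fun x =>
  decidable_of_iff (x.val = 3 ∨ x.val = 5 ∨ x.val = 7) Iff.rfl
instance : DecidablePred (· ∈ B13) := fun x => decidable_of_iff (x.val ≤ 2) Iff.rfl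

def A15 : Set (ZMod 15) := {x | x.val = 4 ∨ x.val = 5 ∨ x.val = 6}
def B15 : Set (ZMod 15) := {x | x.val = 0 ∨ x.val = 1 ∨ x.val = 8}
instance : DecidablePred (· ∈ A15) := fun x =>
  decidable_of_iff (x.val = 4 ∨ x.val = 5 ∨ x.val = 6) Iff.rfl
instance : DecidablePred (· ∈ B15) := fun x =>
  decidable_of_iff (x.val = 0 ∨ x.val = 1 ∨ x.val = 8) Iff.rfl

def A17 : Set (ZMod 17) := {x | x.val = 3 ∨ x.val = 5 ∨ x.val = 7}
def B17 : Set (ZMod 17) := {x | x.val = 0 ∨ x.val = 1 ∨ x.val = 9}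
instance : DecidablePred (· ∈ A17) := fun x =>
  decidable_of_iff (x.val = 3 ∨ x.val = 5 ∨ x.val = 7) Iff.rfl
instance : DecidablePred (· ∈ B17) := fun x =>
  decidable_of_iff (x.val = 0 ∨ x.val = 1 ∨ x.val = 9) Iff.rfl

end NotFilledConcrete

theorem dihedral_odd_not_filled (n : ℕ) (hodd : Odd n) (hn : 13 ≤ n) :
    ∃ S : Set (DihedralGroup n), LocallyMaximalPF S ∧ ¬ Fills S := by
  have h2 := Nat.odd_iff.mp hodd
  have hcase : n = 13 ∨ n = 15 ∨ n = 17 ∨ 19 ≤ n := by omega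
  rcases hcase with rfl | rfl | rfl | h19
  · exact ⟨NotFilledAux.dset NotFilledConcrete.A13 NotFilledConcrete.B13,
      NotFilledAux.master _ _ (by decide) (by decide) (by decide) (by decide) (by decide)⟩
  · exact ⟨NotFilledAux.dset NotFilledConcrete.A15 NotFilledConcrete.B15,
      NotFilledAux.master _ _ (by decide) (by decide) (by decide) (by decide) (by decide)⟩
  · exact ⟨NotFilledAux.dset NotFilledConcrete.A17 NotFilledConcrete.B17,
      NotFilledAux.master _ _ (by decide) (by decide) (by decide) (by decide) (by decide)⟩
  · obtain ⟨m, q, hm, hq1, hq2, hc3, hc5, hc6, hc9, hc10, hc4⟩ :=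
      NotFilledAux2.exists_mq n hodd h19
    haveI : NeZero n := ⟨by omega⟩
    exact ⟨NotFilledAux.dset (NotFilledAux2.Ag m q) (NotFilledAux2.Bg m),
      NotFilledAux.master _ _
        (NotFilledAux2.gh1 m q hm hq1 hq2 hc3 hc5 hc6 hc9 hc10 hc4)
        (NotFilledAux2.gh2 m q hm hq1 hq2 hc3 hc5 hc6 hc9 hc10 hc4)
        (NotFilledAux2.gh4 m q hm hq1 hq2 hc3 hc5 hc6 hc9 hc10 hc4)
        (NotFilledAux2.gh5 m q hm hq1 hq2 hc3 hc5 hc6 hc9 hc10 hc4)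
        (NotFilledAux2.gh6 m q hm hq1 hq2 hc3 hc5 hc6 hc9 hc10 hc4)⟩
end

section
/- In the dihedral group D_{2n} with n = 5k−2 for an odd integer k ≥ 3, the set S = {x^k, x^{k+2}, …, x^{3k−2}} ∪ {y, xy, …, x^{k−1}y} is a locally maximal product-free set, and x^{3k} ∉ S ∪ SS, so S does not fill D_{2n}. -/
open Pointwise

/-!
Write `r i` and `sr i` with representatives `0 ≤ i < n`, so that `S` consists of the rotations
`r i` with `i` odd in `[k, 3k - 2]` and the reflections `sr i` with `i < k`. Adding or subtracting
such representatives modulo `n = 5k - 2` (an odd number) shows that the rotations in `S * S` have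
exponent in `[0, k - 1]`, even in `[2k, 4k - 2]`, or in `[4k - 1, n - 1]`, and that its
reflections have exponent at least `k`. This gives product-freeness and `r (3k) ∉ S ∪ S * S`.
For maximality, every `g ∉ S` admits some `s ∈ S` with `s⁻¹ * g ∈ S` or `s * g ∈ S`, so no
product-free set contains both `S` and `g`; `s` can always be taken among `sr 0`, `sr 1`,
`sr (k - 1)`, `r k` and `r (3k - 2)`.
-/

open DihedralGroup

theorem ProductFree.locallyMaximalPF {G : Type*} [Group G] {S : Set G} (hS : ProductFree S)
    (h : ∀ g ∉ S, ∃ s ∈ S, s⁻¹ * g ∈ S ∨ s * g ∈ S) : LocallyMaximalPF S := by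
  refine ⟨hS, fun T hT hST => hST.antisymm fun g hgT => ?_⟩
  by_contra hgS
  obtain ⟨s, hs, hsg | hsg⟩ := h g hgS
  · exact Set.disjoint_left.mp hT hgT
      (by simpa using Set.mul_mem_mul (hST hs) (hST hsg))
  · exact Set.disjoint_left.mp hT (hST hsg) (Set.mul_mem_mul (hST hs) hgT)

namespace ZMod

variable {n : ℕ} [NeZero n]

theorem val_add_cases (a b : ZMod n) :
    a.val + b.val < n ∧ (a + b).val = a.val + b.val ∨
      n ≤ a.val + b.val ∧ (a + b).val + n = a.val + b.val := by
  rcases lt_or_ge (a.val + b.val) n with h | h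
  · exact .inl ⟨h, val_add_of_lt h⟩
  · exact .inr ⟨h, (val_add_val_of_le h).symm⟩

theorem val_sub_cases (a b : ZMod n) :
    b.val ≤ a.val ∧ (a - b).val + b.val = a.val ∨
      a.val < b.val ∧ (a - b).val + b.val = a.val + n := by
  have := (a - b).val_lt
  rcases val_add_cases (a - b) b with ⟨-, h⟩ | ⟨-, h⟩ <;> rw [sub_add_cancel] at h <;> omega

end ZMod

def dihedralSet (n k : ℕ) : Set (DihedralGroup n) :=
  {g | ∃ i < k, g = r ((k + 2 * i : ℕ) : ZMod n)} ∪ {g | ∃ i < k, g = sr ((i : ℕ) : ZMod n)}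

section dihedralSet

variable {n k : ℕ} [NeZero n]

theorem r_mem_dihedralSet_iff (h : 3 * k ≤ n) (a : ZMod n) :
    r a ∈ dihedralSet n k ↔ k ≤ a.val ∧ a.val < 3 * k ∧ a.val % 2 = k % 2 := by
  constructor
  · rintro (⟨i, hi, hai⟩ | ⟨i, -, hai⟩)
    · rw [r.injEq] at hai
      rw [hai, ZMod.val_cast_of_lt (by omega)]
      omega
    · exact nomatch hai
  · rintro ⟨h₁, h₂, h₃⟩
    refine .inl ⟨(a.val - k) / 2, by omega, ?_⟩
    rw [show k + 2 * ((a.val - k) / 2) = a.val by omega, ZMod.natCast_zmod_val]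

theorem sr_mem_dihedralSet_iff (h : k ≤ n) (a : ZMod n) :
    sr a ∈ dihedralSet n k ↔ a.val < k := by
  constructor
  · rintro (⟨i, -, hai⟩ | ⟨i, hi, hai⟩)
    · exact nomatch hai
    · rw [sr.injEq] at hai
      rw [hai, ZMod.val_cast_of_lt (by omega)]
      exact hi
  · exact fun ha => .inr ⟨a.val, ha, by rw [ZMod.natCast_zmod_val]⟩

theorem r_mem_dihedralSet_mul_self (hn : 5 * k ≤ n + 2) {c : ZMod n}
    (hc : r c ∈ dihedralSet n k * dihedralSet n k) :
    c.val < k ∨ c.val % 2 = 0 ∧ 2 * k ≤ c.val ∨ 4 * k ≤ c.val + 1 := by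
  obtain ⟨u, hu, v, hv, huv⟩ := hc
  rcases u with a | a <;> rcases v with b | b
  · simp only [r_mul_r, r.injEq] at huv
    subst huv
    rw [r_mem_dihedralSet_iff (by omega)] at hu hv
    rcases ZMod.val_add_cases a b with h | h <;> omega
  · exact nomatch huv
  · exact nomatch huv
  · simp only [sr_mul_sr, r.injEq] at huv
    subst huv
    rw [sr_mem_dihedralSet_iff (by omega)] at hu hv
    rcases ZMod.val_sub_cases b a with h | h <;> omega

theorem sr_mem_dihedralSet_mul_self (hn : 5 * k ≤ n + 2) {c : ZMod n}
    (hc : sr c ∈ dihedralSet n k * dihedralSet n k) : k ≤ c.val := by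
  obtain ⟨u, hu, v, hv, huv⟩ := hc
  rcases u with a | a <;> rcases v with b | b
  · exact nomatch huv
  · simp only [r_mul_sr, sr.injEq] at huv
    subst huv
    rw [r_mem_dihedralSet_iff (by omega)] at hu
    rw [sr_mem_dihedralSet_iff (by omega)] at hv
    have := a.val_lt
    rcases ZMod.val_sub_cases b a with h | h <;> omega
  · simp only [sr_mul_r, sr.injEq] at huv
    subst huv
    rw [sr_mem_dihedralSet_iff (by omega)] at hu
    rw [r_mem_dihedralSet_iff (by omega)] at hv
    rcases ZMod.val_add_cases a b with h | h <;> omega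
  · exact nomatch huv

theorem productFree_dihedralSet (hn : 5 * k ≤ n + 2) (hk : Odd k) :
    ProductFree (dihedralSet n k) := by
  have hk2 := Nat.odd_iff.mp hk
  refine Set.disjoint_left.mpr fun g hgS hgSS => ?_
  rcases g with c | c
  · rw [r_mem_dihedralSet_iff (by omega)] at hgS
    have := r_mem_dihedralSet_mul_self hn hgSS
    omega
  · rw [sr_mem_dihedralSet_iff (by omega)] at hgS
    have := sr_mem_dihedralSet_mul_self hn hgSS
    omega

theorem exists_mem_dihedralSet_of_r_not_mem (hn : n + 2 = 5 * k) (hk : Odd k) {a : ZMod n}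
    (ha : r a ∉ dihedralSet n k) :
    ∃ s ∈ dihedralSet n k, s⁻¹ * r a ∈ dihedralSet n k ∨ s * r a ∈ dihedralSet n k := by
  have hk2 := Nat.odd_iff.mp hk
  have hav := a.val_lt
  have hval {c : ℕ} (hc : c < n) : ((c : ℕ) : ZMod n).val = c := ZMod.val_cast_of_lt hc
  rw [r_mem_dihedralSet_iff (by omega)] at ha
  obtain h | h | h | h | h : a.val < k ∨ k ≤ a.val ∧ a.val < 2 * k ∧ a.val % 2 = 0 ∨
      2 * k ≤ a.val ∧ a.val + 1 < 4 * k ∧ a.val % 2 = 0 ∨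
      3 * k ≤ a.val ∧ a.val + 1 < 4 * k ∧ a.val % 2 = 1 ∨ 4 * k ≤ a.val + 1 := by
    omega
  · refine ⟨sr ((0 : ℕ) : ZMod n), .inr ⟨0, by omega, rfl⟩, .inl ?_⟩
    rw [inv_sr, sr_mul_r, sr_mem_dihedralSet_iff (by omega)]
    rcases ZMod.val_add_cases ((0 : ℕ) : ZMod n) a with h' | h' <;>
      rw [hval (by omega)] at h' <;> omega
  · refine ⟨r ((k : ℕ) : ZMod n), .inl ⟨0, by omega, rfl⟩, .inr ?_⟩
    rw [r_mul_r, r_mem_dihedralSet_iff (by omega)]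
    rcases ZMod.val_add_cases ((k : ℕ) : ZMod n) a with h' | h' <;>
      rw [hval (by omega)] at h' <;> omega
  · refine ⟨r ((k : ℕ) : ZMod n), .inl ⟨0, by omega, rfl⟩, .inl ?_⟩
    rw [inv_r, r_mul_r, neg_add_eq_sub, r_mem_dihedralSet_iff (by omega)]
    rcases ZMod.val_sub_cases a ((k : ℕ) : ZMod n) with h' | h' <;>
      rw [hval (by omega)] at h' <;> omega
  · refine ⟨r ((k + 2 * (k - 1) : ℕ) : ZMod n), .inl ⟨k - 1, by omega, rfl⟩, .inr ?_⟩
    rw [r_mul_r, r_mem_dihedralSet_iff (by omega)]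
    rcases ZMod.val_add_cases ((k + 2 * (k - 1) : ℕ) : ZMod n) a with h' | h' <;>
      rw [hval (by omega)] at h' <;> omega
  · refine ⟨sr ((k - 1 : ℕ) : ZMod n), .inr ⟨k - 1, by omega, rfl⟩, .inl ?_⟩
    rw [inv_sr, sr_mul_r, sr_mem_dihedralSet_iff (by omega)]
    rcases ZMod.val_add_cases ((k - 1 : ℕ) : ZMod n) a with h' | h' <;>
      rw [hval (by omega)] at h' <;> omega

theorem exists_mem_dihedralSet_of_sr_not_mem (hn : n + 2 = 5 * k) (hk : Odd k) (h3 : 3 ≤ k)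
    {a : ZMod n} (ha : sr a ∉ dihedralSet n k) :
    ∃ s ∈ dihedralSet n k, s⁻¹ * sr a ∈ dihedralSet n k ∨ s * sr a ∈ dihedralSet n k := by
  have hk2 := Nat.odd_iff.mp hk
  have hav := a.val_lt
  have hval {c : ℕ} (hc : c < n) : ((c : ℕ) : ZMod n).val = c := ZMod.val_cast_of_lt hc
  rw [sr_mem_dihedralSet_iff (by omega)] at ha
  obtain h | h | h | h : a.val < 3 * k ∧ a.val % 2 = 0 ∨ a.val < 3 * k ∧ a.val % 2 = 1 ∨
      3 * k ≤ a.val ∧ a.val + 2 < 4 * k ∨ 4 * k ≤ a.val + 2 := by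
    omega
  · refine ⟨sr ((1 : ℕ) : ZMod n), .inr ⟨1, by omega, rfl⟩, .inl ?_⟩
    rw [inv_sr, sr_mul_sr, r_mem_dihedralSet_iff (by omega)]
    rcases ZMod.val_sub_cases a ((1 : ℕ) : ZMod n) with h' | h' <;>
      rw [hval (by omega)] at h' <;> omega
  · refine ⟨sr ((0 : ℕ) : ZMod n), .inr ⟨0, by omega, rfl⟩, .inl ?_⟩
    rw [inv_sr, sr_mul_sr, r_mem_dihedralSet_iff (by omega)]
    rcases ZMod.val_sub_cases a ((0 : ℕ) : ZMod n) with h' | h' <;>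
      rw [hval (by omega)] at h' <;> omega
  · refine ⟨r ((k + 2 * (k - 1) : ℕ) : ZMod n), .inl ⟨k - 1, by omega, rfl⟩, .inr ?_⟩
    rw [r_mul_sr, sr_mem_dihedralSet_iff (by omega)]
    rcases ZMod.val_sub_cases a ((k + 2 * (k - 1) : ℕ) : ZMod n) with h' | h' <;>
      rw [hval (by omega)] at h' <;> omega
  · refine ⟨r ((k : ℕ) : ZMod n), .inl ⟨0, by omega, rfl⟩, .inl ?_⟩
    rw [inv_r, r_mul_sr, sub_neg_eq_add, sr_mem_dihedralSet_iff (by omega)]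
    rcases ZMod.val_add_cases a ((k : ℕ) : ZMod n) with h' | h' <;>
      rw [hval (by omega)] at h' <;> omega

theorem locallyMaximalPF_dihedralSet (hn : n + 2 = 5 * k) (hk : Odd k) (h3 : 3 ≤ k) :
    LocallyMaximalPF (dihedralSet n k) := by
  refine (productFree_dihedralSet hn.ge hk).locallyMaximalPF ?_
  rintro (a | a) ha
  · exact exists_mem_dihedralSet_of_r_not_mem hn hk ha
  · exact exists_mem_dihedralSet_of_sr_not_mem hn hk h3 ha

theorem r_three_mul_not_mem_dihedralSet (hn : n + 2 = 5 * k) (hk : Odd k) (h3 : 3 ≤ k) :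
    r ((3 * k : ℕ) : ZMod n) ∉ dihedralSet n k ∪ dihedralSet n k * dihedralSet n k := by
  have hk2 := Nat.odd_iff.mp hk
  have hval : ((3 * k : ℕ) : ZMod n).val = 3 * k := ZMod.val_cast_of_lt (by omega)
  rintro (h | h)
  · rw [r_mem_dihedralSet_iff (by omega), hval] at h
    omega
  · have := r_mem_dihedralSet_mul_self hn.ge h
    rw [hval] at this
    omega

end dihedralSet

theorem dihedral_5k_sub_2 (k : ℕ) (hk : Odd k) (h3 : 3 ≤ k) :
    let n := 5 * k - 2
    let S : Set (DihedralGroup n) :=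
      {g | ∃ i < k, g = DihedralGroup.r ((k + 2 * i : ℕ) : ZMod n)} ∪
        {g | ∃ i < k, g = DihedralGroup.sr ((i : ℕ) : ZMod n)}
    LocallyMaximalPF S ∧
      DihedralGroup.r ((3 * k : ℕ) : ZMod n) ∉ S ∪ S * S ∧ ¬ Fills S := by
  intro n S
  have : NeZero n := ⟨by omega⟩
  have hn : n + 2 = 5 * k := by omega
  have hnot := r_three_mul_not_mem_dihedralSet hn hk h3
  refine ⟨locallyMaximalPF_dihedralSet hn hk h3, hnot, fun hfill => hnot (hfill _ ?_)⟩
  rw [one_def, Ne, r.injEq, ← ZMod.val_injective n |>.eq_iff, ZMod.val_cast_of_lt (by omega),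
    ZMod.val_zero]
  omega
end

section
/- Let G be a finite nontrivial 2-group such that every proper nontrivial quotient of G is elementary abelian. Then G is elementary abelian, or extraspecial, or cyclic of order 4, or of the form E ∗ C₄ (a central product of an extraspecial group E with C₄ amalgamating the centre) with |G| = 2|E|. -/
open Pointwise

/-- A finite 2-group is extraspecial if its centre equals its derived subgroup,
has order 2, and contains all squares (equivalently `Z(G) = [G,G] = Φ(G) ≅ C₂`). -/
def IsExtraspecial (G : Type*) [Group G] : Prop :=
  Subgroup.center G = commutator G ∧ Nat.card (Subgroup.center G) = 2 ∧
    ∀ g : G, g ^ 2 ∈ Subgroup.center G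

section Helpers

open Subgroup

private lemma zmod2_ne_zero : ∀ (a : ZMod 2), a ≠ 0 → a = 1 := by decide
private lemma zmod2_cases : ∀ (a : ZMod 2), a = 0 ∨ a = 1 := by decide

private lemma eq_one_of_odd_zpow {G : Type*} [Group G] (h2 : IsPGroup 2 G) {g : G} {n : ℤ}
    (hn : Odd n) (h : g ^ n = 1) : g = 1 := by
  obtain ⟨k, hk⟩ := h2 g
  have hdvd : orderOf g ∣ 2 ^ k := orderOf_dvd_of_pow_eq_one hk
  have hdvd2 : (orderOf g : ℤ) ∣ n := orderOf_dvd_iff_zpow_eq_one.mpr h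
  have hodd : Odd (orderOf g) := by
    rcases Nat.even_or_odd (orderOf g) with he | ho
    · exfalso
      have : (2 : ℤ) ∣ n := dvd_trans (by exact_mod_cast he.two_dvd) hdvd2
      exact (Int.not_odd_iff_even.mpr (even_iff_two_dvd.mpr this)) hn
    · exact ho
  have h1 : orderOf g = 1 := by
    rcases (Nat.dvd_prime_pow Nat.prime_two).mp hdvd with ⟨j, hj, hje⟩
    rcases Nat.eq_zero_or_pos j with rfl | hjp
    · simpa using hje
    · exfalso
      have : 2 ∣ orderOf g := hje ▸ dvd_pow_self 2 hjp.ne'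
      exact (Nat.not_odd_iff_even.mpr (even_iff_two_dvd.mpr this)) hodd
  exact orderOf_eq_one_iff.mp h1

private lemma mem_zpowers_sq {G : Type*} [Group G] {x y : G} (hx : x ^ 2 = 1)
    (hy : y ∈ Subgroup.zpowers x) : y = 1 ∨ y = x := by
  obtain ⟨m, rfl⟩ := hy
  have hz : x ^ (2 : ℤ) = 1 := by
    rw [show (2:ℤ) = ((2:ℕ):ℤ) by norm_num, zpow_natCast, hx]
  rcases Int.even_or_odd m with ⟨l, rfl⟩ | ⟨l, rfl⟩
  · left
    show x ^ (l + l) = 1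
    rw [show l + l = 2 * l by ring, zpow_mul, hz, one_zpow]
  · right
    show x ^ (2 * l + 1) = x
    rw [zpow_add, zpow_mul, hz, one_zpow, zpow_one, one_mul]

private lemma exists_involution_zpowers {G : Type*} [Group G] :
    ∀ (k : ℕ) (u : G), u ≠ 1 → u ^ (2 ^ k) = 1 →
      ∃ t : G, t ≠ 1 ∧ t ^ 2 = 1 ∧ t ∈ Subgroup.zpowers u := by
  intro k
  induction k with
  | zero => intro u hu h; simp at h; exact absurd h hu
  | succ k ih =>
    intro u hu h
    by_cases h2 : u ^ 2 = 1
    · exact ⟨u, hu, h2, Subgroup.mem_zpowers u⟩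
    · obtain ⟨t, ht1, ht2, ht3⟩ := ih (u ^ 2) h2 (by rw [← pow_mul, ← pow_succ']; exact h)
      exact ⟨t, ht1, ht2, Subgroup.zpowers_le.mpr (pow_mem (Subgroup.mem_zpowers u) 2) ht3⟩

end Helpers

open Subgroup
open scoped commutatorElement

theorem two_group_all_quotients_elementary_abelian
    {G : Type*} [Group G] [Finite G] [Nontrivial G] (h2 : IsPGroup 2 G)
    (hq : ∀ (N : Subgroup G) [N.Normal], N ≠ ⊥ → N ≠ ⊤ → ∀ x : G ⧸ N, x ^ 2 = 1) :
    (∀ g : G, g ^ 2 = 1) ∨ IsExtraspecial G ∨ (IsCyclic G ∧ Nat.card G = 4) ∨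
      (∃ E : Subgroup G, E.Normal ∧ IsExtraspecial E ∧ E.index = 2 ∧
        IsCyclic (Subgroup.center G) ∧ Nat.card (Subgroup.center G) = 4 ∧
        E ⊔ Subgroup.center G = ⊤ ∧
        Nat.card (E ⊓ Subgroup.center G : Subgroup G) = 2) := by
  haveI : Fact (Nat.Prime 2) := ⟨Nat.prime_two⟩
  by_cases hexp : ∀ g : G, g ^ 2 = 1
  · exact Or.inl hexp
  push_neg at hexp
  obtain ⟨g, hg⟩ := hexp
  by_cases hab : ∀ a b : G, a * b = b * a
  · right; right; left
    have hzA : ∀ x : G, x ^ (2 : ℤ) = x ^ 2 := fun x => by exact_mod_cast zpow_natCast x 2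
    have hzB : ∀ x : G, x ^ (4 : ℤ) = x ^ 4 := fun x => by exact_mod_cast zpow_natCast x 4
    have hg1 : g ≠ 1 := fun h => hg (by rw [h, one_pow])
    have hnormal : ∀ x : G, (zpowers x).Normal := fun x =>
      ⟨fun n hn g' => by rw [hab g' n, mul_inv_cancel_right]; exact hn⟩
    -- quotient fact extractor
    have hsq_of : ∀ (x : G), x ≠ 1 → zpowers x ≠ ⊤ → ∀ y : G, y ^ 2 ∈ zpowers x := by
      intro x hx1 hxt y
      haveI := hnormal x
      have h := hq (zpowers x) (fun h => hx1 (zpowers_eq_bot.mp h)) hxt ((QuotientGroup.mk' _) y)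
      rw [← map_pow] at h
      exact (QuotientGroup.eq_one_iff _).mp h
    -- g ∉ zpowers (g^2)
    have hgn2 : g ∉ zpowers (g ^ 2) := by
      rintro ⟨m, hm⟩
      have hm' : (g ^ 2) ^ m = g := hm
      have key : g ^ (2 * m - 1) = 1 := by
        rw [zpow_sub, zpow_mul, hzA, hm', zpow_one, mul_inv_cancel]
      exact hg1 (eq_one_of_odd_zpow h2 ⟨m - 1, by ring⟩ key)
    have htop2 : zpowers (g ^ 2) ≠ ⊤ := fun h => hgn2 (h.symm ▸ Subgroup.mem_top g)
    have hsq : ∀ y : G, y ^ 2 ∈ zpowers (g ^ 2) := hsq_of (g ^ 2) hg htop2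
    -- g ^ 4 = 1
    have hg4 : g ^ 4 = 1 := by
      by_contra h4
      have hgn4 : g ∉ zpowers (g ^ 4) := by
        rintro ⟨m, hm⟩
        have hm' : (g ^ 4) ^ m = g := hm
        have key : g ^ (4 * m - 1) = 1 := by
          rw [zpow_sub, zpow_mul, hzB, hm', zpow_one, mul_inv_cancel]
        exact hg1 (eq_one_of_odd_zpow h2 ⟨2 * m - 1, by ring⟩ key)
      have htop4 : zpowers (g ^ 4) ≠ ⊤ := fun h => hgn4 (h.symm ▸ Subgroup.mem_top g)
      obtain ⟨m, hm⟩ := hsq_of (g ^ 4) h4 htop4 g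
      have hm' : (g ^ 4) ^ m = g ^ 2 := hm
      have key : (g ^ 2) ^ (2 * m - 1) = 1 := by
        rw [← hzA g, ← zpow_mul, show (2:ℤ) * (2 * m - 1) = 4 * m - 2 by ring,
          zpow_sub, zpow_mul, hzB g, hm', hzA g, mul_inv_cancel]
      exact hg (eq_one_of_odd_zpow h2 ⟨m - 1, by ring⟩ key)
    have hg22 : (g ^ 2) ^ 2 = 1 := by rw [← pow_mul]; exact hg4
    -- every element is in zpowers g
    have hgen : ∀ x : G, x ∈ zpowers g := by
      by_contra hc
      push_neg at hc
      obtain ⟨x, hx⟩ := hc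
      have key : ∀ y : G, y ∉ zpowers g → y ^ 2 = 1 → False := by
        intro y hy hy2
        have hy1 : y ≠ 1 := fun h => hy (h ▸ one_mem _)
        have htop' : zpowers y ≠ ⊤ := by
          intro h
          rcases mem_zpowers_sq hy2 (h.symm ▸ Subgroup.mem_top g) with h1 | h1
          · exact hg1 h1
          · exact hy (h1 ▸ Subgroup.mem_zpowers g)
        rcases mem_zpowers_sq hy2 (hsq_of y hy1 htop' g) with h1 | h1
        · exact hg h1
        · exact hy (h1 ▸ pow_mem (Subgroup.mem_zpowers g) 2)
      rcases mem_zpowers_sq hg22 (hsq x) with h1 | h1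
      · exact key x hx h1
      · have hx' : x * g⁻¹ ∉ zpowers g := fun h =>
          hx (by simpa using mul_mem h (Subgroup.mem_zpowers g))
        have hcom : Commute x g⁻¹ := (hab x g⁻¹)
        have h2' : (x * g⁻¹) ^ 2 = 1 := by
          rw [hcom.mul_pow, inv_pow, h1, mul_inv_cancel]
        exact key (x * g⁻¹) hx' h2'
    have hord : orderOf g = 4 := by
      have h := orderOf_eq_prime_pow (p := 2) (n := 1) (x := g) (by simpa using hg)
        (by norm_num; exact hg4)
      simpa using h
    constructor
    · exact ⟨⟨g, hgen⟩⟩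
    · have htopz : zpowers g = ⊤ := by
        ext x; simp [hgen x]
      calc Nat.card G = Nat.card ↥(⊤ : Subgroup G) := (Nat.card_congr Subgroup.topEquiv.toEquiv).symm
        _ = Nat.card ↥(zpowers g) := by rw [htopz]
        _ = 4 := by rw [Nat.card_zpowers, hord]
  · push_neg at hab
    obtain ⟨a0, b0, hab0⟩ := hab
    have hcne : Subgroup.center G ≠ ⊤ := fun h =>
      hab0 (Subgroup.mem_center_iff.mp (h.symm ▸ Subgroup.mem_top b0) a0)
    -- a central involution t
    haveI : Nontrivial ↥(Subgroup.center G) := h2.center_nontrivial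
    obtain ⟨u, hu⟩ := exists_ne (1 : ↥(Subgroup.center G))
    obtain ⟨k, hk⟩ := h2 (u : G)
    obtain ⟨t, ht1, ht2, htu⟩ := exists_involution_zpowers k (u : G) (fun h => hu (Subtype.ext h)) hk
    have htc : t ∈ Subgroup.center G := (Subgroup.zpowers_le.mpr u.2) htu
    -- the minimal normal subgroup N
    have hnormal_c : ∀ x : G, x ∈ Subgroup.center G → (zpowers x).Normal := fun x hx =>
      ⟨fun n hn g' => by
        have hc := Subgroup.mem_center_iff.mp ((Subgroup.zpowers_le.mpr hx) hn) g'
        rw [hc, mul_inv_cancel_right]; exact hn⟩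
    haveI hN : (zpowers t).Normal := hnormal_c t htc
    have hbotN : zpowers t ≠ ⊥ := fun h => ht1 (zpowers_eq_bot.mp h)
    have htopN : zpowers t ≠ ⊤ := fun h =>
      hcne (eq_top_iff.mpr (h ▸ Subgroup.zpowers_le.mpr htc))
    have hQ2 := hq (zpowers t) hbotN htopN
    have hsq : ∀ x : G, x ^ 2 ∈ zpowers t := by
      intro x
      have h := hQ2 ((QuotientGroup.mk' _) x)
      rw [← map_pow] at h
      exact (QuotientGroup.eq_one_iff _).mp h
    have hQcomm : ∀ x y : G ⧸ zpowers t, x * y = y * x := by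
      have inv_self : ∀ a : G ⧸ zpowers t, a⁻¹ = a := fun a =>
        inv_eq_of_mul_eq_one_right (by rw [← pow_two]; exact hQ2 a)
      intro x y
      calc x * y = (x * y)⁻¹ := (inv_self (x * y)).symm
        _ = y⁻¹ * x⁻¹ := mul_inv_rev _ _
        _ = y * x := by rw [inv_self, inv_self]
    -- commutator subgroup facts
    have hcommle : commutator G ≤ zpowers t := by
      rw [_root_.commutator_def, Subgroup.commutator_le]
      intro g₁ _ g₂ _
      apply (QuotientGroup.eq_one_iff _).mp
      show (QuotientGroup.mk' (zpowers t)) ⁅g₁, g₂⁆ = 1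
      rw [map_commutatorElement]
      exact commutatorElement_eq_one_iff_commute.mpr (hQcomm _ _)
    have hc_ne : ⁅a0, b0⁆ ≠ 1 := fun h => hab0 (commutatorElement_eq_one_iff_commute.mp h).eq
    have hc_mem : ⁅a0, b0⁆ ∈ commutator G := by
      rw [_root_.commutator_def]
      exact Subgroup.commutator_mem_commutator (Subgroup.mem_top a0) (Subgroup.mem_top b0)
    have ht_comm : t ∈ commutator G := by
      rcases mem_zpowers_sq ht2 (hcommle hc_mem) with h | h
      · exact absurd h hc_ne
      · exact h ▸ hc_mem
    have hcomm_eq : commutator G = zpowers t :=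
      le_antisymm hcommle (Subgroup.zpowers_le.mpr ht_comm)
    -- uniqueness of the central involution
    have hUniq : ∀ w, w ∈ Subgroup.center G → w ^ 2 = 1 → w = 1 ∨ w = t := by
      intro w hw hw2
      by_cases hw1 : w = 1
      · exact Or.inl hw1
      right
      haveI := hnormal_c w hw
      have hble : zpowers w ≠ ⊥ := fun h => hw1 (zpowers_eq_bot.mp h)
      have htle : zpowers w ≠ ⊤ := fun h =>
        hcne (eq_top_iff.mpr (h ▸ Subgroup.zpowers_le.mpr hw))
      have hcle : commutator G ≤ zpowers w := by
        rw [_root_.commutator_def, Subgroup.commutator_le]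
        intro g₁ _ g₂ _
        apply (QuotientGroup.eq_one_iff _).mp
        show (QuotientGroup.mk' (zpowers w)) ⁅g₁, g₂⁆ = 1
        rw [map_commutatorElement]
        apply commutatorElement_eq_one_iff_commute.mpr
        have inv_self : ∀ a : G ⧸ zpowers w, a⁻¹ = a := fun a =>
          inv_eq_of_mul_eq_one_right (by rw [← pow_two]; exact hq (zpowers w) hble htle a)
        show _ * _ = _ * _
        calc (QuotientGroup.mk' (zpowers w)) g₁ * (QuotientGroup.mk' (zpowers w)) g₂
            = ((QuotientGroup.mk' (zpowers w)) g₁ * (QuotientGroup.mk' (zpowers w)) g₂)⁻¹ :=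
              (inv_self _).symm
          _ = _ := by rw [mul_inv_rev, inv_self, inv_self]
      rcases mem_zpowers_sq hw2 (hcle ht_comm) with h | h
      · exact absurd h ht1
      · exact h.symm
    by_cases hzex : ∃ z, z ∈ Subgroup.center G ∧ z ^ 2 ≠ 1
    · -- case B
      obtain ⟨z, hzc, hz2⟩ := hzex
      right; right; right
      have hz2t : z ^ 2 = t := by
        rcases mem_zpowers_sq ht2 (hsq z) with h | h
        · exact absurd h hz2
        · exact h
      have hz4 : z ^ 4 = 1 := by
        rw [show (4:ℕ) = 2 * 2 by norm_num, pow_mul, hz2t]; exact ht2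
      have hzn1 : z ≠ 1 := fun h => hz2 (by rw [h, one_pow])
      have hordz : orderOf z = 4 := by
        have h := orderOf_eq_prime_pow (p := 2) (n := 1) (x := z)
          (by rw [pow_one]; exact hz2) (by rw [show (2:ℕ)^(1+1) = 4 by norm_num]; exact hz4)
        rw [h]; norm_num
      have hcent : Subgroup.center G = zpowers z := by
        apply le_antisymm _ (Subgroup.zpowers_le.mpr hzc)
        intro w hw
        rcases mem_zpowers_sq ht2 (hsq w) with hw2 | hw2
        · rcases hUniq w hw hw2 with h | h
          · rw [h]; exact one_mem _
          · rw [h, ← hz2t]; exact pow_mem (Subgroup.mem_zpowers z) 2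
        · have hcomm_wz : Commute w z⁻¹ := (Subgroup.mem_center_iff.mp hw z⁻¹).symm
          have h1 : (w * z⁻¹) ^ 2 = 1 := by
            rw [hcomm_wz.mul_pow, inv_pow, hw2, hz2t, mul_inv_cancel]
          rcases hUniq _ (mul_mem hw (inv_mem hzc)) h1 with h | h
          · rw [mul_inv_eq_one.mp h]; exact Subgroup.mem_zpowers z
          · rw [mul_inv_eq_iff_eq_mul.mp h, ← hz2t]
            exact mul_mem (pow_mem (Subgroup.mem_zpowers z) 2) (Subgroup.mem_zpowers z)
      have hccyc : IsCyclic ↥(Subgroup.center G) := by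
        refine ⟨⟨⟨z, hzc⟩, fun x => ?_⟩⟩
        obtain ⟨m, hm⟩ := (hcent.le) x.2
        have hm' : z ^ m = (x : G) := hm
        exact ⟨m, Subtype.ext (by rw [SubgroupClass.coe_zpow]; exact hm')⟩
      have hccard : Nat.card ↥(Subgroup.center G) = 4 := by
        rw [hcent, Nat.card_zpowers, hordz]
      -- construct E as the kernel of a character killing t but not z
      letI : CommGroup (G ⧸ zpowers t) :=
        { (inferInstance : Group (G ⧸ zpowers t)) with mul_comm := hQcomm }
      letI : Module (ZMod 2) (Additive (G ⧸ zpowers t)) :=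
        AddCommGroup.zmodModule (by
          intro x
          have h := ofMul_pow 2 (Additive.toMul x)
          rw [hQ2 (Additive.toMul x)] at h
          simpa using h.symm)
      have hzN : z ∉ zpowers t := by
        intro h
        rcases mem_zpowers_sq ht2 h with h1 | h1
        · exact hzn1 h1
        · exact hz2 (by rw [h1]; exact ht2)
      obtain ⟨f, hf⟩ : ∃ f : Module.Dual (ZMod 2) (Additive (G ⧸ zpowers t)),
          f (Additive.ofMul ((QuotientGroup.mk' (zpowers t)) z)) ≠ 0 := by
        by_contra hcon
        push_neg at hcon
        have h0 := (Module.forall_dual_apply_eq_zero_iff (ZMod 2) _).mp hcon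
        have h1 : (QuotientGroup.mk' (zpowers t)) z = 1 := by
          rwa [show (0 : Additive (G ⧸ zpowers t)) = Additive.ofMul 1 from rfl,
            Additive.ofMul.apply_eq_iff_eq] at h0
        exact hzN ((QuotientGroup.eq_one_iff z).mp h1)
      set ψ : G →* Multiplicative (ZMod 2) :=
        { toFun := fun x =>
            Multiplicative.ofAdd (f (Additive.ofMul ((QuotientGroup.mk' (zpowers t)) x))),
          map_one' := by simp,
          map_mul' := by
            intro a b
            simp [map_mul, ofMul_mul, map_add, ofAdd_add] } with hpsidef
      have hψz : ψ z = Multiplicative.ofAdd (1 : ZMod 2) := by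
        have h1 : f (Additive.ofMul ((QuotientGroup.mk' (zpowers t)) z)) = 1 := zmod2_ne_zero _ hf
        show Multiplicative.ofAdd (f (Additive.ofMul ((QuotientGroup.mk' (zpowers t)) z)))
          = Multiplicative.ofAdd (1 : ZMod 2)
        rw [h1]
      have hzE : z ∉ ψ.ker := by
        intro h
        have h1 : ψ z = 1 := h
        rw [hψz] at h1
        exact one_ne_zero (Multiplicative.ofAdd.injective (h1.trans ofAdd_zero.symm))
      have htE : t ∈ ψ.ker := by
        show Multiplicative.ofAdd (f (Additive.ofMul ((QuotientGroup.mk' (zpowers t)) t))) = 1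
        have h1 : (QuotientGroup.mk' (zpowers t)) t = 1 :=
          (QuotientGroup.eq_one_iff t).mpr (Subgroup.mem_zpowers t)
        rw [h1]
        simp
      have hNE : zpowers t ≤ ψ.ker := Subgroup.zpowers_le.mpr htE
      have hsurj : Function.Surjective ψ := by
        intro y
        rcases zmod2_cases (Multiplicative.toAdd y) with h | h
        · refine ⟨1, ?_⟩
          rw [map_one, ← ofAdd_toAdd y, h]
          exact ofAdd_zero.symm
        · refine ⟨z, ?_⟩
          rw [hψz, ← ofAdd_toAdd y, h]
      have hindex : ψ.ker.index = 2 := by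
        rw [Subgroup.index_ker, MonoidHom.range_eq_top.mpr hsurj]
        rw [show Nat.card ↥(⊤ : Subgroup (Multiplicative (ZMod 2)))
            = Nat.card (Multiplicative (ZMod 2)) from Nat.card_congr Subgroup.topEquiv.toEquiv]
        rw [Nat.card_eq_fintype_card]
        decide
      have hzsup : z ∈ ψ.ker ⊔ Subgroup.center G := Subgroup.mem_sup_right hzc
      have hsup : ψ.ker ⊔ Subgroup.center G = ⊤ := by
        have hd := Subgroup.index_dvd_of_le (le_sup_left : ψ.ker ≤ ψ.ker ⊔ Subgroup.center G)
        rw [hindex] at hd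
        rcases (Nat.prime_two.eq_one_or_self_of_dvd _ hd) with h1 | h1
        · exact Subgroup.index_eq_one.mp h1
        · exfalso
          have hr := Subgroup.relIndex_mul_index
            (le_sup_left : ψ.ker ≤ ψ.ker ⊔ Subgroup.center G)
          rw [h1, hindex] at hr
          have h3 : ψ.ker.relIndex (ψ.ker ⊔ Subgroup.center G) = 1 := by omega
          exact hzE (Subgroup.relIndex_eq_one.mp h3 hzsup)
      have hint : ψ.ker ⊓ Subgroup.center G = zpowers t := by
        apply le_antisymm
        · rintro w hw
          obtain ⟨hwE, hwc⟩ := Subgroup.mem_inf.mp hw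
          rcases mem_zpowers_sq ht2 (hsq w) with hw2 | hw2
          · rcases hUniq w hwc hw2 with h | h
            · rw [h]; exact one_mem _
            · rw [h]; exact Subgroup.mem_zpowers t
          · exfalso
            have hcomm_wz : Commute w z⁻¹ := (Subgroup.mem_center_iff.mp hwc z⁻¹).symm
            have h1 : (w * z⁻¹) ^ 2 = 1 := by
              rw [hcomm_wz.mul_pow, inv_pow, hw2, hz2t, mul_inv_cancel]
            rcases hUniq _ (mul_mem hwc (inv_mem hzc)) h1 with h | h
            · exact hzE (by rw [← mul_inv_eq_one.mp h]; exact hwE)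
            · have hw_eq : w = t * z := mul_inv_eq_iff_eq_mul.mp h
              have hzmem : z = t⁻¹ * w := by
                rw [hw_eq, ← mul_assoc, inv_mul_cancel, one_mul]
              exact hzE (by rw [hzmem]; exact mul_mem (inv_mem htE) hwE)
        · exact le_inf hNE (Subgroup.zpowers_le.mpr htc)
      have hcard_int : Nat.card ↥(ψ.ker ⊓ Subgroup.center G) = 2 := by
        rw [hint, Nat.card_zpowers]
        exact orderOf_eq_prime ht2 ht1
      have hdecomp : ∀ x : G, ∃ h ∈ ψ.ker, ∃ n ∈ Subgroup.center G, h * n = x := by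
        intro x
        have hx : x ∈ ψ.ker ⊔ Subgroup.center G := hsup.symm ▸ Subgroup.mem_top x
        have hx2 : x ∈ ((ψ.ker : Set G) * (Subgroup.center G : Set G)) := by
          rw [← Subgroup.mul_normal]; exact hx
        exact Set.mem_mul.mp hx2
      set t' : ↥ψ.ker := ⟨t, htE⟩ with ht'def
      have ht'2 : t' ^ 2 = 1 := by
        apply Subtype.ext
        simp only [SubgroupClass.coe_pow, OneMemClass.coe_one]
        exact ht2
      have ht'1 : t' ≠ 1 := fun h => ht1 (congrArg Subtype.val h)
      have hcentE_mem : ∀ e : ↥ψ.ker, e ∈ Subgroup.center ↥ψ.ker → (e : G) ∈ zpowers t := by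
        intro e he
        have hecent : (e : G) ∈ Subgroup.center G := by
          rw [Subgroup.mem_center_iff]
          intro x
          obtain ⟨h, hh, n, hn, rfl⟩ := hdecomp x
          have h1 : h * (e : G) = (e : G) * h :=
            congrArg Subtype.val (Subgroup.mem_center_iff.mp he ⟨h, hh⟩)
          have h2 : n * (e : G) = (e : G) * n := (Subgroup.mem_center_iff.mp hn (e : G)).symm
          calc h * n * (e:G) = h * ((e:G) * n) := by rw [mul_assoc, h2]
            _ = (e:G) * (h * n) := by rw [← mul_assoc, h1, mul_assoc]
        have hmem : (e : G) ∈ ψ.ker ⊓ Subgroup.center G := Subgroup.mem_inf.mpr ⟨e.2, hecent⟩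
        exact hint ▸ hmem
      have hcentE : Subgroup.center ↥ψ.ker = zpowers t' := by
        ext e
        constructor
        · intro he
          rcases mem_zpowers_sq ht2 (hcentE_mem e he) with h | h
          · rw [show e = 1 from Subtype.ext h]; exact one_mem _
          · rw [show e = t' from Subtype.ext h]; exact Subgroup.mem_zpowers t'
        · intro he
          rcases mem_zpowers_sq ht'2 he with h | h
          · rw [h]; exact one_mem _
          · rw [h, Subgroup.mem_center_iff]
            intro f'
            exact Subtype.ext (Subgroup.mem_center_iff.mp htc (f' : G))
      have hcardE : Nat.card ↥(Subgroup.center ↥ψ.ker) = 2 := by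
        rw [hcentE, Nat.card_zpowers]
        exact orderOf_eq_prime ht'2 ht'1
      have hEnonab : ∃ e f' : ↥ψ.ker, ⁅e, f'⁆ ≠ 1 := by
        by_contra hcon
        push_neg at hcon
        have hEcent : ∀ x : G, x ∈ ψ.ker → x ∈ Subgroup.center G := by
          intro x hx
          rw [Subgroup.mem_center_iff]
          intro y
          obtain ⟨h, hh, n, hn, rfl⟩ := hdecomp y
          have h1 : h * x = x * h := by
            have hc := hcon ⟨h, hh⟩ ⟨x, hx⟩
            exact congrArg Subtype.val (commutatorElement_eq_one_iff_commute.mp hc).eq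
          have h2 : n * x = x * n := (Subgroup.mem_center_iff.mp hn x).symm
          calc h * n * x = h * (x * n) := by rw [mul_assoc, h2]
            _ = x * (h * n) := by rw [← mul_assoc, h1, mul_assoc]
        apply hab0
        obtain ⟨h, hh, n, hn, rfl⟩ := hdecomp b0
        exact Subgroup.mem_center_iff.mp (mul_mem (hEcent h hh) hn) a0
      have hcommE_le : commutator ↥ψ.ker ≤ Subgroup.center ↥ψ.ker := by
        rw [_root_.commutator_def, Subgroup.commutator_le]
        intro e _ f' _
        have hmem : ((⁅e, f'⁆ : ↥ψ.ker) : G) ∈ zpowers t := by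
          rw [← hcomm_eq, _root_.commutator_def]
          exact Subgroup.commutator_mem_commutator (Subgroup.mem_top _) (Subgroup.mem_top _)
        rw [hcentE]
        rcases mem_zpowers_sq ht2 hmem with h | h
        · rw [show (⁅e, f'⁆ : ↥ψ.ker) = 1 from Subtype.ext h]
          exact one_mem _
        · rw [show (⁅e, f'⁆ : ↥ψ.ker) = t' from Subtype.ext h]
          exact Subgroup.mem_zpowers t'
      have hcommE : Subgroup.center ↥ψ.ker = commutator ↥ψ.ker := by
        apply le_antisymm _ hcommE_le
        obtain ⟨e, f', hef⟩ := hEnonab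
        have h1 : ⁅e, f'⁆ ∈ commutator ↥ψ.ker := by
          rw [_root_.commutator_def]
          exact Subgroup.commutator_mem_commutator (Subgroup.mem_top _) (Subgroup.mem_top _)
        have h2 := hcommE_le h1
        rw [hcentE] at h2
        rcases mem_zpowers_sq ht'2 h2 with h | h
        · exact absurd h hef
        · rw [hcentE]
          exact Subgroup.zpowers_le.mpr (h ▸ h1)
      have hsqE : ∀ e : ↥ψ.ker, e ^ 2 ∈ Subgroup.center ↥ψ.ker := by
        intro e
        rw [hcentE]
        have hco : ((e ^ 2 : ↥ψ.ker) : G) ∈ zpowers t := by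
          rw [SubgroupClass.coe_pow]
          exact hsq (e : G)
        rcases mem_zpowers_sq ht2 hco with h | h
        · rw [show (e ^ 2 : ↥ψ.ker) = 1 from Subtype.ext h]; exact one_mem _
        · rw [show (e ^ 2 : ↥ψ.ker) = t' from Subtype.ext h]; exact Subgroup.mem_zpowers t'
      exact ⟨ψ.ker, ψ.normal_ker, ⟨hcommE, hcardE, hsqE⟩, hindex, hccyc, hccard, hsup, hcard_int⟩
    · -- case A : extraspecial
      push_neg at hzex
      right; left
      have hcent : Subgroup.center G = zpowers t := by
        apply le_antisymm _ (Subgroup.zpowers_le.mpr htc)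
        intro w hw
        rcases hUniq w hw (hzex w hw) with h | h
        · rw [h]; exact one_mem _
        · rw [h]; exact Subgroup.mem_zpowers t
      refine ⟨by rw [hcent, hcomm_eq], ?_, ?_⟩
      · rw [hcent, Nat.card_zpowers]
        exact orderOf_eq_prime ht2 ht1
      · intro x
        rw [hcent]
        exact hsq x
end

section
/- Let G be a finite 2-group of the form E ∗ C₄, where E is extraspecial, |G| = 2|E|, and the central product amalgamates the centre of E with the subgroup of order 2 in C₄. Then G is not filled. -/
open Pointwise

/-!
Let `x` generate `Z(G) ≅ C₄` and put `z = x²`. Every square of `E` lies in `Z(E) = ⟨z⟩`, and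
every element outside `E` is `x e` with `e ∈ E`, so every square of `G` is `1` or `z`.
Extend `{z}` to a locally maximal product-free set `S`. Then `x ∉ S`, since `x² = z ∈ S`, and
`x ∉ SS`: if `x = s t` with `s, t ∈ S`, then `s² ≠ z` forces `s² = 1`, and then
`t² = (s⁻¹ x)² = x² = z` because `x` is central, so `z ∈ SS`. Hence `S` does not fill `G`.
-/

namespace ProductFree

variable {G : Type*} [Group G] {S : Set G}

theorem mul_ne {a b c : G} (hS : ProductFree S) (ha : a ∈ S) (hb : b ∈ S) (hc : c ∈ S) :
    a * b ≠ c := fun h =>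
  Set.disjoint_left.mp hS hc (h ▸ Set.mul_mem_mul ha hb)

theorem singleton_s11 {z : G} (hz : z ≠ 1) : ProductFree ({z} : Set G) := by
  rw [ProductFree, Set.singleton_mul_singleton, Set.disjoint_singleton]
  exact fun h => hz (left_eq_mul.mp h)

theorem sUnion_of_isChain {c : Set (Set G)} (hc : ∀ T ∈ c, ProductFree T)
    (hchain : IsChain (· ⊆ ·) c) : ProductFree (⋃₀ c) := by
  refine Set.disjoint_left.mpr ?_
  rintro a ⟨A, hA, ha⟩ ⟨b, ⟨B, hB, hb⟩, d, ⟨D, hD, hd⟩, rfl⟩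
  obtain ⟨T, hT, hAT, hBT, hDT⟩ := hchain.exists3 hA hB hD
  exact (hc T hT).mul_ne (hBT hb) (hDT hd) (hAT ha) rfl

theorem exists_locallyMaximalPF_superset (hS : ProductFree S) :
    ∃ T, S ⊆ T ∧ LocallyMaximalPF T := by
  obtain ⟨T, hST, hT⟩ := zorn_subset_nonempty {T : Set G | ProductFree T}
    (fun c hc hchain _ => ⟨⋃₀ c, sUnion_of_isChain hc hchain, fun _ => Set.subset_sUnion_of_mem⟩)
    S hS
  exact ⟨T, hST, hT.prop, fun U hU hTU => le_antisymm hTU (hT.le_of_ge hU hTU)⟩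

end ProductFree

theorem not_filled_of_sq_eq_one_or_eq {G : Type*} [Group G] {x : G}
    (hx : x ∈ Subgroup.center G) (hx2 : x ^ 2 ≠ 1) (hsq : ∀ a : G, a ^ 2 = 1 ∨ a ^ 2 = x ^ 2) :
    ¬ Filled G := by
  intro hFilled
  obtain ⟨S, hzS, hS⟩ := (ProductFree.singleton_s11 hx2).exists_locallyMaximalPF_superset
  have hsq_ne (a : G) (ha : a ∈ S) : a ^ 2 ≠ x ^ 2 := by
    rw [sq a]; exact hS.1.mul_ne ha ha (hzS rfl)
  rcases hFilled S hS x (fun h => hx2 (by rw [h, one_pow])) with hxS | ⟨s, hs, t, ht, hst⟩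
  · exact hsq_ne _ hxS rfl
  · have hs2 : s ^ 2 = 1 := (hsq s).resolve_right (hsq_ne s hs)
    refine hsq_ne t ht ?_
    have hsx : Commute s⁻¹ x := Subgroup.mem_center_iff.mp hx s⁻¹
    rw [eq_inv_mul_of_mul_eq hst, hsx.mul_pow, inv_pow, hs2, inv_one, one_mul]

theorem Subgroup.eq_one_or_eq_of_card_eq_two {G : Type*} [Group G] {D : Subgroup G}
    (hD : Nat.card D = 2) {z w : G} (hz : z ∈ D) (hz1 : z ≠ 1) (hw : w ∈ D) : w = 1 ∨ w = z := by
  obtain ⟨y, -, hy⟩ := (Nat.card_eq_two_iff' (1 : D)).mp hD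
  refine or_iff_not_imp_left.mpr fun hw1 => ?_
  have hwy := hy ⟨w, hw⟩ fun h => hw1 congr($h.1)
  have hzy := hy ⟨z, hz⟩ fun h => hz1 congr($h.1)
  exact congr($(hwy.trans hzy.symm).1)

theorem IsExtraspecial.sq_mem_inf_center {G : Type*} [Group G] {E : Subgroup G}
    (hE : IsExtraspecial E) (hEZ : Nat.card (E ⊓ Subgroup.center G : Subgroup G) = 2) {e : G}
    (he : e ∈ E) : e ^ 2 ∈ E ⊓ Subgroup.center G := by
  have hle : (E ⊓ Subgroup.center G).subgroupOf E ≤ Subgroup.center E := fun a ha =>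
    Subgroup.mem_center_iff.mpr fun b => Subtype.ext (Subgroup.mem_center_iff.mp ha.2 b)
  have : Finite (Subgroup.center E) := Nat.finite_of_card_ne_zero (by rw [hE.2.1]; norm_num)
  have hcard : Nat.card ((E ⊓ Subgroup.center G).subgroupOf E) = 2 := by
    rw [Nat.card_congr (Subgroup.subgroupOfEquivOfLe inf_le_left).toEquiv, hEZ]
  have hcenter := Subgroup.eq_of_le_of_card_ge hle (by rw [hE.2.1, hcard])
  have hsq := hE.2.2 ⟨e, he⟩
  rw [← hcenter, Subgroup.mem_subgroupOf] at hsq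
  exact hsq

theorem Subgroup.sq_mem_of_index_two_of_mem_center {G : Type*} [Group G] {H D : Subgroup G}
    (hH : H.index = 2) {x : G} (hx : x ∈ Subgroup.center G) (hxH : x ∉ H) (hx2 : x ^ 2 ∈ D)
    (hHD : ∀ h ∈ H, h ^ 2 ∈ D) (a : G) : a ^ 2 ∈ D := by
  by_cases ha : a ∈ H
  · exact hHD a ha
  have hxa : x⁻¹ * a ∈ H :=
    (mul_mem_iff_of_index_two hH).mpr (iff_of_false (inv_mem_iff.not.mpr hxH) ha)
  have hcomm : Commute x (x⁻¹ * a) := (Subgroup.mem_center_iff.mp hx _).symm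
  rw [← mul_inv_cancel_left x a, hcomm.mul_pow]
  exact D.mul_mem hx2 (hHD _ hxa)

theorem central_product_extraspecial_C4_not_filled_general
    {G : Type*} [Group G] (E : Subgroup G)
    (hE : IsExtraspecial E) (hidx : E.index = 2)
    (hZ : IsCyclic (Subgroup.center G)) (hZ4 : Nat.card (Subgroup.center G) = 4)
    (hEZ : Nat.card (E ⊓ Subgroup.center G : Subgroup G) = 2) :
    ¬ Filled G := by
  obtain ⟨⟨x, hx⟩, hgen⟩ := hZ.exists_generator
  have horder : orderOf x = 4 := by
    rw [← hZ4, ← orderOf_eq_card_of_forall_mem_zpowers hgen, Subgroup.orderOf_mk]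
  have hx2 : x ^ 2 ≠ 1 := fun h => by
    have := orderOf_dvd_of_pow_eq_one h
    rw [horder] at this
    norm_num at this
  have hxE : x ∉ E := fun h => hx2 <| orderOf_dvd_iff_pow_eq_one.mp <|
    hEZ ▸ Subgroup.orderOf_dvd_natCard _ ⟨h, hx⟩
  have hsq : ∀ a : G, a ^ 2 ∈ E ⊓ Subgroup.center G :=
    Subgroup.sq_mem_of_index_two_of_mem_center hidx hx hxE
      ⟨E.sq_mem_of_index_two hidx x, pow_mem hx 2⟩ fun _ => hE.sq_mem_inf_center hEZ
  exact not_filled_of_sq_eq_one_or_eq hx hx2 fun a =>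
    Subgroup.eq_one_or_eq_of_card_eq_two hEZ (hsq x) hx2 (hsq a)

theorem central_product_extraspecial_C4_not_filled
    {G : Type*} [Group G] [Finite G] (E : Subgroup G)
    (hE : IsExtraspecial E) (hidx : E.index = 2)
    (hZ : IsCyclic (Subgroup.center G)) (hZ4 : Nat.card (Subgroup.center G) = 4)
    (hEZ : Nat.card (E ⊓ Subgroup.center G : Subgroup G) = 2) :
    ¬ Filled G :=
  central_product_extraspecial_C4_not_filled_general E hE hidx hZ hZ4 hEZ
end

section
/- Let G be a finite group of exponent 4 in which all elements of order 4 have the same square, a central involution z. If S is a locally maximal product-free set in G that does not fill G, then z ∈ S and every element of S is an involution. -/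
open Pointwise

/-!
All squares of `G` lie in the central subgroup `{1, z}`, so `(b * c)⁻¹ = c * b` whenever
`b ^ 2 = c ^ 2`. As the three squares in a relation `a * b * c = 1` cannot be pairwise
distinct, such a relation would put one of `a, b, c` into the product of the other two: a
product-free set contains no such relation. Now suppose `z ∉ S`. Then no square lies in `S`,
and local maximality puts every `h ∉ S ∪ {1}` into `SS ∪ SS⁻¹ ∪ S⁻¹S`. For `h = s⁻¹` with
`s ∈ S` this forces `s⁻¹ ∈ S`, since `s⁻¹ = c * d` would be a relation `s * c * d = 1` in `S`.
So `S` is inverse-closed, `SS⁻¹ ∪ S⁻¹S = SS`, and `S` fills `G`.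
-/

section ProductFree

variable {G : Type*} [Group G] {S : Set G}

theorem ProductFree.mul_notMem (hS : ProductFree S) {a b : G} (ha : a ∈ S) (hb : b ∈ S) :
    a * b ∉ S :=
  fun hab => Set.disjoint_left.mp hS hab (Set.mul_mem_mul ha hb)

theorem ProductFree.one_notMem (hS : ProductFree S) : (1 : G) ∉ S :=
  fun h => hS.mul_notMem h h (by rwa [one_mul])

theorem LocallyMaximalPF.mem_mul_or_of_notMem (hS : LocallyMaximalPF S) {h : G} (hhS : h ∉ S)
    (h1 : h ≠ 1) : h ∈ S * S ∨ h ∈ S * S⁻¹ ∨ h ∈ S⁻¹ * S ∨ h ^ 2 ∈ S := by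
  have hT : ¬ ProductFree (insert h S) := fun hT =>
    hhS ((hS.2 _ hT (Set.subset_insert h S)) ▸ Set.mem_insert h S)
  obtain ⟨_, hx, p, hp, q, hq, rfl⟩ := Set.not_disjoint_iff.mp hT
  have hS1 := hS.1.one_notMem
  rcases hp with rfl | hp <;> rcases hq with rfl | hq <;> rcases hx with hx | hx
  · exact absurd (mul_eq_left.mp hx) h1
  · exact Or.inr (Or.inr (Or.inr (by rwa [pow_two])))
  · exact absurd (mul_eq_left.mp hx ▸ hq) hS1
  · exact Or.inr (Or.inl ⟨_, hx, q⁻¹, Set.inv_mem_inv.mpr hq, by group⟩)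
  · exact absurd (mul_eq_right.mp hx ▸ hp) hS1
  · exact Or.inr (Or.inr (Or.inl ⟨p⁻¹, Set.inv_mem_inv.mpr hp, _, hx, by group⟩))
  · exact Or.inl (hx ▸ Set.mul_mem_mul hp hq)
  · exact absurd hx (hS.1.mul_notMem hp hq)

/-- The options `s⁻¹ = x * q⁻¹` and `s⁻¹ = p⁻¹ * x` of `mem_mul_or_of_notMem` are excluded
because they give `q = s * x` and `p = x * s`. -/
theorem LocallyMaximalPF.inv_mem_or (hS : LocallyMaximalPF S) {s : G} (hs : s ∈ S) :
    s⁻¹ ∈ S ∨ s⁻¹ ∈ S * S ∨ s⁻¹ ^ 2 ∈ S := by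
  by_cases hsS : s⁻¹ ∈ S
  · exact Or.inl hsS
  have hs1 : s⁻¹ ≠ 1 := inv_ne_one.mpr fun h => hS.1.one_notMem (h ▸ hs)
  rcases hS.mem_mul_or_of_notMem hsS hs1 with
    h | ⟨x, hx, q, hq, hxq⟩ | ⟨p, hp, x, hx, hpx⟩ | h
  · exact Or.inr (Or.inl h)
  · have hsx : s * x = q⁻¹ := eq_inv_of_mul_eq_one_left <| by
      rw [mul_assoc, show x * q = s⁻¹ from hxq, mul_inv_cancel]
    exact absurd (hsx ▸ Set.mem_inv.mp hq) (hS.1.mul_notMem hs hx)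
  · have hxs : x * s = p⁻¹ := eq_inv_of_mul_eq_one_right <| by
      rw [← mul_assoc, show p * x = s⁻¹ from hpx, inv_mul_cancel]
    exact absurd (hxs ▸ Set.mem_inv.mp hp) (hS.1.mul_notMem hx hs)
  · exact Or.inr (Or.inr h)

end ProductFree

section SquaresInCenter

variable {G : Type*} [Group G] {z : G} {S : Set G}

theorem sq_eq_one_or_eq_of_exponent_eq_four (hexp : Monoid.exponent G = 4)
    (hsq : ∀ g : G, orderOf g = 4 → g ^ 2 = z) (x : G) : x ^ 2 = 1 ∨ x ^ 2 = z := by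
  by_cases h4 : orderOf x = 4
  · exact Or.inr (hsq x h4)
  left
  rw [← orderOf_dvd_iff_pow_eq_one]
  have hdvd : orderOf x ∣ 4 := hexp ▸ Monoid.order_dvd_exponent x
  have hle := Nat.le_of_dvd four_pos hdvd
  interval_cases orderOf x <;> omega

theorem sq_mem_center_of_sq_eq_one_or_eq (hz : z ∈ Subgroup.center G)
    (hsq : ∀ x : G, x ^ 2 = 1 ∨ x ^ 2 = z) (x : G) : x ^ 2 ∈ Subgroup.center G :=
  (hsq x).elim (fun h => h ▸ Subgroup.one_mem _) (fun h => h ▸ hz)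

theorem pow_four_eq_one_of_sq_eq_one_or_eq (hsq : ∀ x : G, x ^ 2 = 1 ∨ x ^ 2 = z) (x : G) :
    x ^ 4 = 1 := by
  have hz2 : z ^ 2 = 1 := (hsq z).elim id fun h => by
    rw [mul_eq_left.mp ((pow_two z).symm.trans h), one_pow]
  rw [show x ^ 4 = (x ^ 2) ^ 2 by group]
  rcases hsq x with h | h <;> rw [h]
  · exact one_pow 2
  · exact hz2

theorem inv_mul_eq_mul_of_sq_eq (hz : z ∈ Subgroup.center G)
    (hsq : ∀ x : G, x ^ 2 = 1 ∨ x ^ 2 = z) {b c : G} (hbc : b ^ 2 = c ^ 2) :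
    (b * c)⁻¹ = c * b := by
  refine inv_eq_of_mul_eq_one_right ?_
  have hcomm := Subgroup.mem_center_iff.mp (sq_mem_center_of_sq_eq_one_or_eq hz hsq c) b
  calc b * c * (c * b) = b * (c ^ 2 * b) := by simp only [pow_two, mul_assoc]
    _ = b ^ 2 * c ^ 2 := by rw [← hcomm, pow_two b, mul_assoc]
    _ = c ^ 4 := by rw [hbc, ← pow_add]
    _ = 1 := pow_four_eq_one_of_sq_eq_one_or_eq hsq c

theorem ProductFree.mul_mul_ne_one (hz : z ∈ Subgroup.center G)
    (hsq : ∀ x : G, x ^ 2 = 1 ∨ x ^ 2 = z) (hS : ProductFree S)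
    {a b c : G} (ha : a ∈ S) (hb : b ∈ S) (hc : c ∈ S) : a * b * c ≠ 1 := by
  intro habc
  have rotate : ∀ {x y w : G}, x * y * w = 1 → y * w * x = 1 := fun {x y w} h =>
    mul_eq_one_comm.mp ((mul_assoc x y w) ▸ h)
  have collapse : ∀ {x y w : G}, x * y * w = 1 → y ^ 2 = w ^ 2 → x = w * y := fun h hyw =>
    (inv_mul_eq_mul_of_sq_eq hz hsq hyw) ▸ eq_inv_of_mul_eq_one_left (by rwa [← mul_assoc])
  have hpigeon : b ^ 2 = c ^ 2 ∨ c ^ 2 = a ^ 2 ∨ a ^ 2 = b ^ 2 := by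
    rcases hsq a with h | h <;> rcases hsq b with h' | h' <;> rcases hsq c with h'' | h'' <;>
      simp only [h, h', h'', true_or, or_true]
  rcases hpigeon with h | h | h
  · exact hS.mul_notMem hc hb (collapse habc h ▸ ha)
  · exact hS.mul_notMem ha hc (collapse (rotate habc) h ▸ hb)
  · exact hS.mul_notMem hb ha (collapse (rotate (rotate habc)) h ▸ hc)

theorem ProductFree.sq_notMem (hsq : ∀ x : G, x ^ 2 = 1 ∨ x ^ 2 = z) (hS : ProductFree S)
    (hzS : z ∉ S) (x : G) : x ^ 2 ∉ S :=
  (hsq x).elim (fun h => h ▸ hS.one_notMem) (fun h => h ▸ hzS)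

theorem LocallyMaximalPF.inv_mem (hz : z ∈ Subgroup.center G)
    (hsq : ∀ x : G, x ^ 2 = 1 ∨ x ^ 2 = z) (hS : LocallyMaximalPF S) (hzS : z ∉ S) {s : G}
    (hs : s ∈ S) : s⁻¹ ∈ S := by
  rcases hS.inv_mem_or hs with h | ⟨c, hc, d, hd, hcd⟩ | h
  · exact h
  · have hscd : s * c * d = 1 := by rw [mul_assoc, show c * d = s⁻¹ from hcd, mul_inv_cancel]
    exact absurd hscd (hS.1.mul_mul_ne_one hz hsq hs hc hd)
  · exact absurd h (hS.1.sq_notMem hsq hzS _)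

theorem LocallyMaximalPF.fills_of_notMem (hz : z ∈ Subgroup.center G)
    (hsq : ∀ x : G, x ^ 2 = 1 ∨ x ^ 2 = z) (hS : LocallyMaximalPF S) (hzS : z ∉ S) :
    Fills S := by
  intro g hg1
  by_cases hgS : g ∈ S
  · exact Or.inl hgS
  have hinv : S⁻¹ ⊆ S := fun s hs => inv_inv s ▸ hS.inv_mem hz hsq hzS hs
  right
  rcases hS.mem_mul_or_of_notMem hgS hg1 with h | h | h | h
  · exact h
  · exact Set.mul_subset_mul_left hinv h
  · exact Set.mul_subset_mul_right hinv h
  · exact absurd h (hS.1.sq_notMem hsq hzS g)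

end SquaresInCenter

theorem exponent_four_involutions_general {G : Type*} [Group G]
    (hexp : Monoid.exponent G = 4) (z : G) (hz : z ∈ Subgroup.center G)
    (hsq : ∀ g : G, orderOf g = 4 → g ^ 2 = z)
    (S : Set G) (hS : LocallyMaximalPF S) (hnf : ¬ Fills S) :
    z ∈ S ∧ ∀ a ∈ S, orderOf a = 2 := by
  have hsq' := sq_eq_one_or_eq_of_exponent_eq_four hexp hsq
  have hzS : z ∈ S := by_contra fun hzS => hnf (hS.fills_of_notMem hz hsq' hzS)
  refine ⟨hzS, fun a ha => ?_⟩
  rcases hsq' a with h | h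
  · exact orderOf_eq_prime h fun h1 => hS.1.one_notMem (h1 ▸ ha)
  · exact absurd (by rwa [← pow_two, h]) (hS.1.mul_notMem ha ha)

theorem exponent_four_involutions {G : Type*} [Group G] [Finite G]
    (hexp : Monoid.exponent G = 4) (z : G) (hz : z ∈ Subgroup.center G)
    (hz2 : orderOf z = 2) (hsq : ∀ g : G, orderOf g = 4 → g ^ 2 = z)
    (S : Set G) (hS : LocallyMaximalPF S) (hnf : ¬ Fills S) :
    z ∈ S ∧ ∀ a ∈ S, orderOf a = 2 :=
  exponent_four_involutions_general hexp z hz hsq S hS hnf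
end
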